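/- arXiv:2405.18159 — 4 statements merged into one kernel-verified Lean document; each statement's English description precedes it below -/
import Mathlib

section
/- For all real p with 1 < p < ∞, there exist positive constants c(p) and C(p) such that for all vectors ξ, η in ℝⁿ, c(p)·|η|²·(|η|+|ξ|)^{p-2} ≤ |ξ+η|^p − |ξ|^p − p·|ξ|^{p-2}·(ξ·η) ≤ C(p)·|η|²·(|η|+|ξ|)^{p-2}, where |·| denotes the Euclidean norm and ξ·η the Euclidean inner product (the middle expression is interpreted with |ξ|^{p-2}ξ := 0 when ξ = 0). -/
open Set
set_option maxHeartbeats 1000000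



/-- If `f'' ≥ K` on `[0,1]`, then `f 1 ≥ f 0 + f' 0 + K/2`. -/
lemma taylor_lower (f f' f'' : ℝ → ℝ) (K : ℝ)
    (hf : ∀ t ∈ Icc (0:ℝ) 1, HasDerivAt f (f' t) t)
    (hf' : ∀ t ∈ Icc (0:ℝ) 1, HasDerivAt f' (f'' t) t)
    (hK : ∀ t ∈ Icc (0:ℝ) 1, K ≤ f'' t) :
    f 0 + f' 0 + K / 2 ≤ f 1 := by
  set g : ℝ → ℝ := fun t => f t - f' 0 * t - K * t ^ 2 / 2 with hgdef
  set g' : ℝ → ℝ := fun t => f' t - f' 0 - K * t with hg'def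
  have hg : ∀ t ∈ Icc (0:ℝ) 1, HasDerivAt g (g' t) t := by
    intro t ht
    have h1 : HasDerivAt (fun t : ℝ => f' 0 * t) (f' 0) t := by
      simpa using (hasDerivAt_id t).const_mul (f' 0)
    have h2 : HasDerivAt (fun t : ℝ => K * t ^ 2 / 2) (K * t) t := by
      have h := ((hasDerivAt_pow 2 t).const_mul K).div_const 2
      refine h.congr_deriv ?_
      simp; ring
    exact ((hf t ht).sub h1).sub h2
  have hg' : ∀ t ∈ Icc (0:ℝ) 1, HasDerivAt g' (f'' t - K) t := by
    intro t ht
    have h1 : HasDerivAt (fun t : ℝ => f' 0 + K * t) K t := by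
      simpa using ((hasDerivAt_id t).const_mul K).const_add (f' 0)
    simpa [hg'def, sub_sub, Pi.sub_def] using (hf' t ht).sub h1
  have hg'mono : MonotoneOn g' (Icc (0:ℝ) 1) := by
    apply monotoneOn_of_deriv_nonneg (convex_Icc 0 1)
    · exact fun t ht => (hg' t ht).continuousAt.continuousWithinAt
    · intro t ht
      rw [interior_Icc] at ht
      exact (hg' t (Ioo_subset_Icc_self ht)).differentiableAt.differentiableWithinAt
    · intro t ht
      rw [interior_Icc] at ht
      rw [(hg' t (Ioo_subset_Icc_self ht)).deriv]
      have := hK t (Ioo_subset_Icc_self ht)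
      linarith
  have hg'0 : g' 0 = 0 := by simp [hg'def]
  have hg'nonneg : ∀ t ∈ Icc (0:ℝ) 1, 0 ≤ g' t := by
    intro t ht
    have := hg'mono (left_mem_Icc.2 one_pos.le) ht ht.1
    rw [hg'0] at this; exact this
  have hgmono : MonotoneOn g (Icc (0:ℝ) 1) := by
    apply monotoneOn_of_deriv_nonneg (convex_Icc 0 1)
    · exact fun t ht => (hg t ht).continuousAt.continuousWithinAt
    · intro t ht
      rw [interior_Icc] at ht
      exact (hg t (Ioo_subset_Icc_self ht)).differentiableAt.differentiableWithinAt
    · intro t ht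
      rw [interior_Icc] at ht
      rw [(hg t (Ioo_subset_Icc_self ht)).deriv]
      exact hg'nonneg t (Ioo_subset_Icc_self ht)
  have := hgmono (left_mem_Icc.2 one_pos.le) (right_mem_Icc.2 one_pos.le) zero_le_one
  simp only [hgdef] at this
  nlinarith [this]
lemma taylor_upper (f f' f'' : ℝ → ℝ) (K : ℝ)
    (hf : ∀ t ∈ Icc (0:ℝ) 1, HasDerivAt f (f' t) t)
    (hf' : ∀ t ∈ Icc (0:ℝ) 1, HasDerivAt f' (f'' t) t)
    (hK : ∀ t ∈ Icc (0:ℝ) 1, f'' t ≤ K) :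
    f 1 ≤ f 0 + f' 0 + K / 2 := by
  have := taylor_lower (fun t => -f t) (fun t => -f' t) (fun t => -f'' t) (-K)
    (fun t ht => (hf t ht).neg) (fun t ht => (hf' t ht).neg)
    (fun t ht => by simpa using neg_le_neg (hK t ht))
  linarith
lemma piece_lower (f f' f'' : ℝ → ℝ) (K α β : ℝ) (hα : 0 ≤ α) (hαβ : α < β) (hβ : β < 1)
    (hf : ∀ t ∈ Icc (0:ℝ) 1, HasDerivAt f (f' t) t)
    (hf' : ∀ t ∈ Icc (0:ℝ) 1, HasDerivAt f' (f'' t) t)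
    (hpos : ∀ t ∈ Icc (0:ℝ) 1, 0 ≤ f'' t)
    (hK : ∀ t ∈ Icc α β, K ≤ f'' t) (hK0 : 0 ≤ K) :
    f 0 + f' 0 + K * (β - α) * (1 - β) ≤ f 1 := by
  have hβ0 : (0:ℝ) < β := lt_of_le_of_lt hα hαβ
  have hsub : Icc α β ⊆ Icc (0:ℝ) 1 := Icc_subset_Icc hα hβ.le
  have hsub2 : Icc (0:ℝ) β ⊆ Icc (0:ℝ) 1 := Icc_subset_Icc le_rfl hβ.le
  have hsub3 : Icc β 1 ⊆ Icc (0:ℝ) 1 := Icc_subset_Icc hβ0.le le_rfl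
  -- f' is monotone on [0,1]
  have hf'mono : MonotoneOn f' (Icc (0:ℝ) 1) := by
    apply monotoneOn_of_deriv_nonneg (convex_Icc 0 1)
    · exact fun t ht => (hf' t ht).continuousAt.continuousWithinAt
    · intro t ht
      rw [interior_Icc] at ht
      exact (hf' t (Ioo_subset_Icc_self ht)).differentiableAt.differentiableWithinAt
    · intro t ht
      rw [interior_Icc] at ht
      rw [(hf' t (Ioo_subset_Icc_self ht)).deriv]
      exact hpos t (Ioo_subset_Icc_self ht)
  -- Step 1 : f β - f 0 ≥ f' 0 * β
  have step1 : f' 0 * β ≤ f β - f 0 := by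
    obtain ⟨c, hc, hceq⟩ := exists_hasDerivAt_eq_slope f f' hβ0
      (fun t ht => (hf t (hsub2 ht)).continuousAt.continuousWithinAt)
      (fun t ht => hf t (hsub2 (Ioo_subset_Icc_self ht)))
    have h1 : f' 0 ≤ f' c := hf'mono (left_mem_Icc.2 one_pos.le)
      (hsub2 (Ioo_subset_Icc_self hc)) hc.1.le
    rw [hceq] at h1
    have := (le_div_iff₀ (by linarith : (0:ℝ) < β - 0)).mp h1
    nlinarith [this]
  -- Step 2 : f 1 - f β ≥ f' β * (1 - β)
  have step2 : f' β * (1 - β) ≤ f 1 - f β := by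
    obtain ⟨c, hc, hceq⟩ := exists_hasDerivAt_eq_slope f f' hβ
      (fun t ht => (hf t (hsub3 ht)).continuousAt.continuousWithinAt)
      (fun t ht => hf t (hsub3 (Ioo_subset_Icc_self ht)))
    have h1 : f' β ≤ f' c := hf'mono (hsub3 (left_mem_Icc.2 hβ.le))
      (hsub3 (Ioo_subset_Icc_self hc)) hc.1.le
    rw [hceq] at h1
    have := (le_div_iff₀ (by linarith : (0:ℝ) < 1 - β)).mp h1
    linarith
  -- Step 3 : f' β - f' α ≥ K * (β - α)
  have step3 : K * (β - α) ≤ f' β - f' α := by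
    obtain ⟨c, hc, hceq⟩ := exists_hasDerivAt_eq_slope f' f'' hαβ
      (fun t ht => (hf' t (hsub ht)).continuousAt.continuousWithinAt)
      (fun t ht => hf' t (hsub (Ioo_subset_Icc_self ht)))
    have h1 : K ≤ f'' c := hK c (Ioo_subset_Icc_self hc)
    rw [hceq] at h1
    have := (le_div_iff₀ (by linarith : (0:ℝ) < β - α)).mp h1
    linarith
  -- Step 4 : f' 0 ≤ f' α
  have step4 : f' 0 ≤ f' α := hf'mono (left_mem_Icc.2 one_pos.le)
    (hsub (left_mem_Icc.2 hαβ.le)) hα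
  have h5 : (f' 0 + K * (β - α)) * (1 - β) ≤ f' β * (1 - β) := by
    apply mul_le_mul_of_nonneg_right _ (by linarith)
    linarith
  nlinarith [step1, step2, h5]
private lemma sq_rpow (x e : ℝ) (hx : 0 ≤ x) : (x ^ 2) ^ e = x ^ (2 * e) := by
  rw [← Real.rpow_natCast x 2, ← Real.rpow_mul hx]
  norm_num

section
variable {p a b s : ℝ}

noncomputable def qf (a b s : ℝ) : ℝ → ℝ := fun t => b ^ 2 * t ^ 2 + 2 * s * t + a ^ 2
noncomputable def ff (p a b s : ℝ) : ℝ → ℝ := fun t => (qf a b s t) ^ (p / 2)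
noncomputable def ff' (p a b s : ℝ) : ℝ → ℝ :=
  fun t => p * (qf a b s t) ^ (p / 2 - 1) * (b ^ 2 * t + s)
noncomputable def ff'' (p a b s : ℝ) : ℝ → ℝ := fun t =>
  p * (qf a b s t) ^ (p / 2 - 2) * ((p - 2) * (b ^ 2 * t + s) ^ 2 + qf a b s t * b ^ 2)

lemma ff''_sandwich (hp : 1 < p) (hs : |s| ≤ a * b) {t : ℝ} (hq : 0 < qf a b s t) :
    (2 ≤ p → p * b ^ 2 * (qf a b s t) ^ (p / 2 - 1) ≤ ff'' p a b s t ∧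
        ff'' p a b s t ≤ p * (p - 1) * b ^ 2 * (qf a b s t) ^ (p / 2 - 1)) ∧
      (p ≤ 2 → p * (p - 1) * b ^ 2 * (qf a b s t) ^ (p / 2 - 1) ≤ ff'' p a b s t ∧
        ff'' p a b s t ≤ p * b ^ 2 * (qf a b s t) ^ (p / 2 - 1)) := by
  have habs := abs_le.mp hs
  have hX0 : (0:ℝ) ≤ (b ^ 2 * t + s) ^ 2 := sq_nonneg _
  have hXq : (b ^ 2 * t + s) ^ 2 ≤ qf a b s t * b ^ 2 := by
    have hss : s ^ 2 ≤ (a * b) ^ 2 := by nlinarith [habs.1, habs.2]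
    unfold qf; nlinarith [hss]
  have hq2 : (0:ℝ) ≤ (qf a b s t) ^ (p / 2 - 2) := Real.rpow_nonneg hq.le _
  have hq1 : (qf a b s t) ^ (p / 2 - 1) = (qf a b s t) ^ (p / 2 - 2) * qf a b s t := by
    rw [show p / 2 - 1 = (p / 2 - 2) + 1 by ring, Real.rpow_add hq, Real.rpow_one]
  have hpp : 0 < p := by linarith
  constructor
  · intro hp2
    constructor
    · unfold ff''
      rw [hq1]
      nlinarith [mul_nonneg (mul_nonneg (by linarith : (0:ℝ) ≤ p - 2) hX0) hq2]
    · unfold ff''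
      rw [hq1]
      nlinarith [mul_nonneg (mul_nonneg (by linarith : (0:ℝ) ≤ p - 2)
        (by linarith : (0:ℝ) ≤ qf a b s t * b ^ 2 - (b ^ 2 * t + s) ^ 2)) hq2]
  · intro hp2
    constructor
    · unfold ff''
      rw [hq1]
      nlinarith [mul_nonneg (mul_nonneg (by linarith : (0:ℝ) ≤ 2 - p)
        (by linarith : (0:ℝ) ≤ qf a b s t * b ^ 2 - (b ^ 2 * t + s) ^ 2)) hq2]
    · unfold ff''
      rw [hq1]
      nlinarith [mul_nonneg (mul_nonneg (by linarith : (0:ℝ) ≤ 2 - p) hX0) hq2]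

lemma ff_zero (ha : 0 ≤ a) : ff p a b s 0 = a ^ p := by
  unfold ff qf
  rw [show b ^ 2 * (0:ℝ) ^ 2 + 2 * s * 0 + a ^ 2 = a ^ 2 by ring, sq_rpow a (p / 2) ha,
    show 2 * (p / 2) = p by ring]

lemma ff'_zero (ha : 0 ≤ a) : ff' p a b s 0 = p * a ^ (p - 2) * s := by
  unfold ff' qf
  rw [show b ^ 2 * (0:ℝ) ^ 2 + 2 * s * 0 + a ^ 2 = a ^ 2 by ring,
    sq_rpow a (p / 2 - 1) ha, show 2 * (p / 2 - 1) = p - 2 by ring]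
  ring

lemma ff_one : ff p a b s 1 = (a ^ 2 + 2 * s + b ^ 2) ^ (p / 2) := by
  unfold ff qf
  rw [show b ^ 2 * (1:ℝ) ^ 2 + 2 * s * 1 + a ^ 2 = a ^ 2 + 2 * s + b ^ 2 by ring]


private lemma div_rpow_eq (x c e : ℝ) (hx : 0 ≤ x) (hc : 0 < c) :
    (x / c) ^ e = x ^ e * c ^ (-e) := by
  rw [Real.div_rpow hx hc.le, Real.rpow_neg hc.le, div_eq_mul_inv]

lemma qf_le (ha : 0 ≤ a) (hb : 0 ≤ b) (hs : |s| ≤ a * b) {t : ℝ} (ht : t ∈ Icc (0:ℝ) 1) :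
    qf a b s t ≤ (b + a) ^ 2 := by
  have habs := abs_le.mp hs
  have h1 : s * t ≤ a * b := by nlinarith [ht.1, ht.2, habs.1, habs.2, mul_nonneg ha hb]
  have h2 : b ^ 2 * t ^ 2 ≤ b ^ 2 := by nlinarith [mul_nonneg ht.1 ht.1, sq_nonneg b, mul_le_one₀ ht.2 ht.1 ht.2, sq_nonneg (b*t), sq_nonneg t, mul_nonneg (sq_nonneg b) (mul_nonneg ht.1 ht.1)]
  unfold qf
  nlinarith [h1, h2, mul_nonneg ha hb]

lemma qf_ge_big (ha : 0 ≤ a) (hb : 0 ≤ b) (hs : |s| ≤ a * b) (hab : 2 * b ≤ a)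
    {t : ℝ} (ht : t ∈ Icc (0:ℝ) 1) : ((b + a) / 3) ^ 2 ≤ qf a b s t := by
  have habs := abs_le.mp hs
  have h1 : (a - t * b) ^ 2 ≤ qf a b s t := by
    unfold qf
    nlinarith [mul_nonneg ht.1 (by linarith [habs.1] : (0:ℝ) ≤ s + a * b)]
  have h2 : (b + a) / 3 ≤ a - t * b := by nlinarith [ht.2, hb]
  nlinarith [h2, h1, ht.1, ht.2]

lemma hasDerivAt_qf (t : ℝ) : HasDerivAt (qf a b s) (2 * b ^ 2 * t + 2 * s) t := by
  have h : HasDerivAt (fun t : ℝ => b ^ 2 * t ^ 2 + 2 * s * t + a ^ 2)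
      (b ^ 2 * (2 * t ^ 1) + 2 * s * 1 + 0) t := by
    have := (((hasDerivAt_pow 2 t).const_mul (b ^ 2)).add
      ((hasDerivAt_id t).const_mul (2 * s))).add_const (a ^ 2)
    simpa using this
  refine h.congr_deriv ?_
  ring

lemma hasDerivAt_ff (t : ℝ) (hq : 0 < qf a b s t) :
    HasDerivAt (ff p a b s) (ff' p a b s t) t := by
  have h := (hasDerivAt_qf t).rpow_const (p := p / 2) (Or.inl (ne_of_gt hq))
  refine h.congr_deriv ?_
  unfold ff'
  ring

lemma hasDerivAt_ff' (t : ℝ) (hq : 0 < qf a b s t) :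
    HasDerivAt (ff' p a b s) (ff'' p a b s t) t := by
  have h1 := (hasDerivAt_qf t).rpow_const (p := p / 2 - 1) (Or.inl (ne_of_gt hq))
  have h2 : HasDerivAt (fun t : ℝ => b ^ 2 * t + s) (b ^ 2) t := by
    simpa using ((hasDerivAt_id t).const_mul (b ^ 2)).add_const s
  have h3 := (h1.mul h2).const_mul p
  have h4 : ff' p a b s = fun y => p * (qf a b s y ^ (p / 2 - 1) * (b ^ 2 * y + s)) := by
    funext y; unfold ff'; ring
  rw [h4]
  refine h3.congr_deriv ?_
  unfold ff''
  have he : (qf a b s t) ^ (p / 2 - 1) = (qf a b s t) ^ (p / 2 - 2) * qf a b s t := by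
    rw [show p / 2 - 1 = (p / 2 - 2) + 1 by ring, Real.rpow_add hq, Real.rpow_one]
  have he2 : p / 2 - 1 - 1 = p / 2 - 2 := by ring
  rw [he2, he]
  ring

end
section
variable {p a b s : ℝ}

lemma est_upper_ge2 (hp : 1 < p) (hp2 : 2 ≤ p) (ha : 0 < a) (hb : 0 < b) (hs : |s| ≤ a * b)
    (hqpos : ∀ t ∈ Icc (0:ℝ) 1, 0 < qf a b s t) :
    ff p a b s 1 - ff p a b s 0 - ff' p a b s 0 ≤
      p * (p - 1) / 2 * (b ^ 2 * (b + a) ^ (p - 2)) := by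
  have hba : (0:ℝ) < b + a := by linarith
  set K := p * (p - 1) * b ^ 2 * (b + a) ^ (p - 2) with hK
  have hKb : ∀ t ∈ Icc (0:ℝ) 1, ff'' p a b s t ≤ K := by
    intro t ht
    have hq := hqpos t ht
    have h1 := ((ff''_sandwich hp hs hq).1 hp2).2
    have h2 : (qf a b s t) ^ (p / 2 - 1) ≤ (b + a) ^ (p - 2) := by
      calc (qf a b s t) ^ (p / 2 - 1) ≤ ((b + a) ^ 2) ^ (p / 2 - 1) :=
            Real.rpow_le_rpow hq.le (qf_le ha.le hb.le hs ht) (by linarith)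
        _ = (b + a) ^ (p - 2) := by
            rw [sq_rpow _ _ hba.le, show 2 * (p / 2 - 1) = p - 2 by ring]
    have h3 : (0:ℝ) ≤ p * (p - 1) * b ^ 2 :=
      mul_nonneg (mul_nonneg (by linarith) (by linarith)) (sq_nonneg b)
    calc ff'' p a b s t ≤ p * (p - 1) * b ^ 2 * (qf a b s t) ^ (p / 2 - 1) := h1
      _ ≤ K := by rw [hK]; exact mul_le_mul_of_nonneg_left h2 h3
  have ht := taylor_upper (ff p a b s) (ff' p a b s) (ff'' p a b s) K
    (fun t ht => hasDerivAt_ff t (hqpos t ht)) (fun t ht => hasDerivAt_ff' t (hqpos t ht)) hKb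
  have hKe : K / 2 = p * (p - 1) / 2 * (b ^ 2 * (b + a) ^ (p - 2)) := by rw [hK]; ring
  linarith

lemma est_lower_ge2_big (hp : 1 < p) (hp2 : 2 ≤ p) (ha : 0 < a) (hb : 0 < b) (hs : |s| ≤ a * b)
    (hab : 2 * b ≤ a) (hqpos : ∀ t ∈ Icc (0:ℝ) 1, 0 < qf a b s t) :
    p * (3:ℝ) ^ (2 - p) / 2 * (b ^ 2 * (b + a) ^ (p - 2)) ≤
      ff p a b s 1 - ff p a b s 0 - ff' p a b s 0 := by
  have hba : (0:ℝ) < b + a := by linarith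
  set K := p * b ^ 2 * ((b + a) ^ (p - 2) * (3:ℝ) ^ (2 - p)) with hK
  have hKb : ∀ t ∈ Icc (0:ℝ) 1, K ≤ ff'' p a b s t := by
    intro t ht
    have hq := hqpos t ht
    have h1 := ((ff''_sandwich hp hs hq).1 hp2).1
    have h2 : (b + a) ^ (p - 2) * (3:ℝ) ^ (2 - p) ≤ (qf a b s t) ^ (p / 2 - 1) := by
      calc (b + a) ^ (p - 2) * (3:ℝ) ^ (2 - p)
          = (((b + a) / 3) ^ 2) ^ (p / 2 - 1) := by
            rw [sq_rpow _ _ (by linarith : (0:ℝ) ≤ (b+a)/3), show 2 * (p / 2 - 1) = p - 2 by ring,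
              div_rpow_eq _ _ _ hba.le (by norm_num), show -(p - 2) = 2 - p by ring]
        _ ≤ (qf a b s t) ^ (p / 2 - 1) :=
            Real.rpow_le_rpow (sq_nonneg _) (qf_ge_big ha.le hb.le hs hab ht) (by linarith)
    calc K = p * b ^ 2 * ((b + a) ^ (p - 2) * (3:ℝ) ^ (2 - p)) := hK
      _ ≤ p * b ^ 2 * (qf a b s t) ^ (p / 2 - 1) :=
          mul_le_mul_of_nonneg_left h2 (mul_nonneg (by linarith) (sq_nonneg b))
      _ ≤ ff'' p a b s t := h1
  have ht := taylor_lower (ff p a b s) (ff' p a b s) (ff'' p a b s) K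
    (fun t ht => hasDerivAt_ff t (hqpos t ht)) (fun t ht => hasDerivAt_ff' t (hqpos t ht)) hKb
  have hKe : K / 2 = p * (3:ℝ) ^ (2 - p) / 2 * (b ^ 2 * (b + a) ^ (p - 2)) := by rw [hK]; ring
  linarith

lemma est_lower_le2 (hp : 1 < p) (hp2 : p ≤ 2) (ha : 0 < a) (hb : 0 < b) (hs : |s| ≤ a * b)
    (hqpos : ∀ t ∈ Icc (0:ℝ) 1, 0 < qf a b s t) :
    p * (p - 1) / 2 * (b ^ 2 * (b + a) ^ (p - 2)) ≤
      ff p a b s 1 - ff p a b s 0 - ff' p a b s 0 := by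
  have hba : (0:ℝ) < b + a := by linarith
  set K := p * (p - 1) * b ^ 2 * (b + a) ^ (p - 2) with hK
  have hKb : ∀ t ∈ Icc (0:ℝ) 1, K ≤ ff'' p a b s t := by
    intro t ht
    have hq := hqpos t ht
    have h1 := ((ff''_sandwich hp hs hq).2 hp2).1
    have h2 : (b + a) ^ (p - 2) ≤ (qf a b s t) ^ (p / 2 - 1) := by
      calc (b + a) ^ (p - 2) = ((b + a) ^ 2) ^ (p / 2 - 1) := by
            rw [sq_rpow _ _ hba.le, show 2 * (p / 2 - 1) = p - 2 by ring]
        _ ≤ (qf a b s t) ^ (p / 2 - 1) :=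
            Real.rpow_le_rpow_of_nonpos hq (qf_le ha.le hb.le hs ht) (by linarith)
    calc K ≤ p * (p - 1) * b ^ 2 * (qf a b s t) ^ (p / 2 - 1) := by
          rw [hK]
          exact mul_le_mul_of_nonneg_left h2
            (mul_nonneg (mul_nonneg (by linarith) (by linarith)) (sq_nonneg b))
      _ ≤ ff'' p a b s t := h1
  have ht := taylor_lower (ff p a b s) (ff' p a b s) (ff'' p a b s) K
    (fun t ht => hasDerivAt_ff t (hqpos t ht)) (fun t ht => hasDerivAt_ff' t (hqpos t ht)) hKb
  have hKe : K / 2 = p * (p - 1) / 2 * (b ^ 2 * (b + a) ^ (p - 2)) := by rw [hK]; ring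
  linarith

lemma est_upper_le2_big (hp : 1 < p) (hp2 : p ≤ 2) (ha : 0 < a) (hb : 0 < b) (hs : |s| ≤ a * b)
    (hab : 2 * b ≤ a) (hqpos : ∀ t ∈ Icc (0:ℝ) 1, 0 < qf a b s t) :
    ff p a b s 1 - ff p a b s 0 - ff' p a b s 0 ≤
      p * (3:ℝ) ^ (2 - p) / 2 * (b ^ 2 * (b + a) ^ (p - 2)) := by
  have hba : (0:ℝ) < b + a := by linarith
  set K := p * b ^ 2 * ((b + a) ^ (p - 2) * (3:ℝ) ^ (2 - p)) with hK
  have hKb : ∀ t ∈ Icc (0:ℝ) 1, ff'' p a b s t ≤ K := by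
    intro t ht
    have hq := hqpos t ht
    have h1 := ((ff''_sandwich hp hs hq).2 hp2).2
    have h2 : (qf a b s t) ^ (p / 2 - 1) ≤ (b + a) ^ (p - 2) * (3:ℝ) ^ (2 - p) := by
      calc (qf a b s t) ^ (p / 2 - 1) ≤ (((b + a) / 3) ^ 2) ^ (p / 2 - 1) :=
            Real.rpow_le_rpow_of_nonpos (pow_pos (by linarith : (0:ℝ) < (b+a)/3) 2)
              (qf_ge_big ha.le hb.le hs hab ht) (by linarith)
        _ = (b + a) ^ (p - 2) * (3:ℝ) ^ (2 - p) := by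
            rw [sq_rpow _ _ (by linarith : (0:ℝ) ≤ (b+a)/3), show 2 * (p / 2 - 1) = p - 2 by ring,
              div_rpow_eq _ _ _ hba.le (by norm_num), show -(p - 2) = 2 - p by ring]
    calc ff'' p a b s t ≤ p * b ^ 2 * (qf a b s t) ^ (p / 2 - 1) := h1
      _ ≤ K := by
          rw [hK]
          exact mul_le_mul_of_nonneg_left h2 (mul_nonneg (by linarith) (sq_nonneg b))
  have ht := taylor_upper (ff p a b s) (ff' p a b s) (ff'' p a b s) K
    (fun t ht => hasDerivAt_ff t (hqpos t ht)) (fun t ht => hasDerivAt_ff' t (hqpos t ht)) hKb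
  have hKe : K / 2 = p * (3:ℝ) ^ (2 - p) / 2 * (b ^ 2 * (b + a) ^ (p - 2)) := by rw [hK]; ring
  linarith

end
section
variable {p a b s : ℝ}

lemma est_lower_ge2_small (hp : 1 < p) (hp2 : 2 ≤ p) (ha : 0 < a) (hb : 0 < b)
    (hs : |s| ≤ a * b) (hab : a < 2 * b)
    (hqpos : ∀ t ∈ Icc (0:ℝ) 1, 0 < qf a b s t) :
    p * (4:ℝ) ^ (2 - p) * (3:ℝ) ^ (2 - p) / 64 * (b ^ 2 * (b + a) ^ (p - 2)) ≤
      ff p a b s 1 - ff p a b s 0 - ff' p a b s 0 := by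
  have hba : (0:ℝ) < b + a := by linarith
  have habs := abs_le.mp hs
  -- global nonnegativity of ff''
  have hpos : ∀ t ∈ Icc (0:ℝ) 1, 0 ≤ ff'' p a b s t := by
    intro t ht
    have hq := hqpos t ht
    have h1 := ((ff''_sandwich hp hs hq).1 hp2).1
    have h2 : (0:ℝ) ≤ p * b ^ 2 * (qf a b s t) ^ (p / 2 - 1) :=
      mul_nonneg (mul_nonneg (by linarith) (sq_nonneg b)) (Real.rpow_nonneg hq.le _)
    linarith
  -- the constant K
  set K := p * b ^ 2 * (b ^ (p - 2) * (4:ℝ) ^ (2 - p)) with hK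
  -- on any interval where (b^2*t+s)^2 ≥ (b^2/4)^2 we get ff'' ≥ K
  have key : ∀ t ∈ Icc (0:ℝ) 1, (b ^ 2 / 4) ^ 2 ≤ (b ^ 2 * t + s) ^ 2 →
      K ≤ ff'' p a b s t := by
    intro t ht hX
    have hq := hqpos t ht
    have hXq : (b ^ 2 * t + s) ^ 2 ≤ qf a b s t * b ^ 2 := by
      have hss : s ^ 2 ≤ (a * b) ^ 2 := by nlinarith [habs.1, habs.2]
      unfold qf; nlinarith [hss]
    have hqlb : (b / 4) ^ 2 ≤ qf a b s t := by nlinarith [hb, sq_nonneg b]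
    have h1 := ((ff''_sandwich hp hs hq).1 hp2).1
    have h2 : b ^ (p - 2) * (4:ℝ) ^ (2 - p) ≤ (qf a b s t) ^ (p / 2 - 1) := by
      calc b ^ (p - 2) * (4:ℝ) ^ (2 - p) = ((b / 4) ^ 2) ^ (p / 2 - 1) := by
            rw [sq_rpow _ _ (by linarith : (0:ℝ) ≤ b / 4),
              show 2 * (p / 2 - 1) = p - 2 by ring,
              div_rpow_eq _ _ _ hb.le (by norm_num), show -(p - 2) = 2 - p by ring]
        _ ≤ (qf a b s t) ^ (p / 2 - 1) :=
            Real.rpow_le_rpow (sq_nonneg _) hqlb (by linarith)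
    calc K ≤ p * b ^ 2 * (qf a b s t) ^ (p / 2 - 1) := by
          rw [hK]
          exact mul_le_mul_of_nonneg_left h2 (mul_nonneg (by linarith) (sq_nonneg b))
      _ ≤ ff'' p a b s t := h1
  have hK0 : 0 ≤ K := by
    rw [hK]
    exact mul_nonneg (mul_nonneg (by linarith) (sq_nonneg b))
      (mul_nonneg (Real.rpow_nonneg hb.le _) (Real.rpow_nonneg (by norm_num) _))
  -- piece_lower on a suitable interval
  have hD : K / 64 ≤ ff p a b s 1 - ff p a b s 0 - ff' p a b s 0 := by
    rcases le_or_gt (-(b ^ 2 / 2)) s with hcase | hcase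
    · -- t* ≤ 1/2 : use interval [3/4, 7/8]
      have hKint : ∀ t ∈ Icc (3/4 : ℝ) (7/8), K ≤ ff'' p a b s t := by
        intro t ht
        refine key t (⟨by linarith [ht.1], by linarith [ht.2]⟩) ?_
        have : b ^ 2 / 4 ≤ b ^ 2 * t + s := by nlinarith [ht.1, sq_nonneg b]
        nlinarith [this, sq_nonneg b]
      have := piece_lower (ff p a b s) (ff' p a b s) (ff'' p a b s) K (3/4) (7/8)
        (by norm_num) (by norm_num) (by norm_num)
        (fun t ht => hasDerivAt_ff t (hqpos t ht))
        (fun t ht => hasDerivAt_ff' t (hqpos t ht)) hpos hKint hK0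
      nlinarith [this]
    · -- t* > 1/2 : use interval [1/8, 1/4]
      have hKint : ∀ t ∈ Icc (1/8 : ℝ) (1/4), K ≤ ff'' p a b s t := by
        intro t ht
        refine key t (⟨by linarith [ht.1], by linarith [ht.2]⟩) ?_
        have : b ^ 2 * t + s ≤ -(b ^ 2 / 4) := by nlinarith [ht.2, sq_nonneg b]
        nlinarith [this, sq_nonneg b]
      have := piece_lower (ff p a b s) (ff' p a b s) (ff'' p a b s) K (1/8) (1/4)
        (by norm_num) (by norm_num) (by norm_num)
        (fun t ht => hasDerivAt_ff t (hqpos t ht))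
        (fun t ht => hasDerivAt_ff' t (hqpos t ht)) hpos hKint hK0
      nlinarith [this, hK0]
  -- convert K/64 to the stated constant
  have hconv : (b + a) ^ (p - 2) ≤ (3:ℝ) ^ (p - 2) * b ^ (p - 2) := by
    calc (b + a) ^ (p - 2) ≤ (3 * b) ^ (p - 2) :=
          Real.rpow_le_rpow hba.le (by linarith) (by linarith)
      _ = (3:ℝ) ^ (p - 2) * b ^ (p - 2) := Real.mul_rpow (by norm_num) hb.le
  have h32 : (3:ℝ) ^ (2 - p) * (3:ℝ) ^ (p - 2) = 1 := by
    rw [← Real.rpow_add (by norm_num)]; norm_num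
  have h4 : (0:ℝ) ≤ (4:ℝ) ^ (2 - p) := Real.rpow_nonneg (by norm_num) _
  have h3 : (0:ℝ) ≤ (3:ℝ) ^ (2 - p) := Real.rpow_nonneg (by norm_num) _
  have hc : (0:ℝ) ≤ p * (4:ℝ) ^ (2 - p) * (3:ℝ) ^ (2 - p) / 64 * b ^ 2 :=
    mul_nonneg (div_nonneg (mul_nonneg (mul_nonneg (by linarith) h4) h3) (by norm_num))
      (sq_nonneg b)
  have hmul := mul_le_mul_of_nonneg_left hconv hc
  have heq : (p * (4:ℝ) ^ (2 - p) * (3:ℝ) ^ (2 - p) / 64 * b ^ 2) *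
      ((3:ℝ) ^ (p - 2) * b ^ (p - 2)) = p * b ^ 2 * (b ^ (p - 2) * (4:ℝ) ^ (2 - p)) / 64 := by
    linear_combination (p * (4:ℝ) ^ (2 - p) * b ^ 2 * b ^ (p - 2) / 64) * h32
  have hfin : p * (4:ℝ) ^ (2 - p) * (3:ℝ) ^ (2 - p) / 64 * (b ^ 2 * (b + a) ^ (p - 2)) ≤
      K / 64 := by
    rw [hK]
    calc p * (4:ℝ) ^ (2 - p) * (3:ℝ) ^ (2 - p) / 64 * (b ^ 2 * (b + a) ^ (p - 2))
        = (p * (4:ℝ) ^ (2 - p) * (3:ℝ) ^ (2 - p) / 64 * b ^ 2) * ((b + a) ^ (p - 2)) := by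
          ring
      _ ≤ (p * (4:ℝ) ^ (2 - p) * (3:ℝ) ^ (2 - p) / 64 * b ^ 2) *
          ((3:ℝ) ^ (p - 2) * b ^ (p - 2)) := hmul
      _ = p * b ^ 2 * (b ^ (p - 2) * (4:ℝ) ^ (2 - p)) / 64 := heq
  linarith
end
section
variable {p a b : ℝ}

lemma est_degenerate (hp : 1 < p) (ha : 0 < a) (hab : a ≤ b) :
    min ((2:ℝ) ^ (-p)) ((p - 1) * (2:ℝ) ^ (1 - p)) * b ^ p ≤
        (b - a) ^ p - a ^ p + p * a ^ (p - 1) * b ∧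
      (b - a) ^ p - a ^ p + p * a ^ (p - 1) * b ≤ (1 + p) * b ^ p := by
  have hb : 0 < b := lt_of_lt_of_le ha hab
  have h3a : a ^ p = a ^ (p - 1) * a := by
    have h := Real.rpow_add ha (p - 1) 1
    rw [Real.rpow_one] at h
    rw [show p - 1 + 1 = p by ring] at h
    exact h
  have h3b : b ^ p = b ^ (p - 1) * b := by
    have h := Real.rpow_add hb (p - 1) 1
    rw [Real.rpow_one] at h
    rw [show p - 1 + 1 = p by ring] at h
    exact h
  have hapow : (0:ℝ) ≤ a ^ (p - 1) := Real.rpow_nonneg ha.le _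
  constructor
  · -- lower bound
    rcases le_or_gt a (b / 2) with hcase | hcase
    · have hmin : min ((2:ℝ) ^ (-p)) ((p - 1) * (2:ℝ) ^ (1 - p)) * b ^ p ≤
          (2:ℝ) ^ (-p) * b ^ p :=
        mul_le_mul_of_nonneg_right (min_le_left _ _) (Real.rpow_nonneg hb.le _)
      have h6 : (2:ℝ) ^ (-p) * b ^ p ≤ (b - a) ^ p := by
        have h61 : (b / 2) ^ p ≤ (b - a) ^ p :=
          Real.rpow_le_rpow (by linarith) (by linarith) (by linarith)
        rw [div_rpow_eq _ _ _ hb.le (by norm_num)] at h61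
        linarith
      have h7 : (0:ℝ) ≤ a ^ (p - 1) * (p * b - a) :=
        mul_nonneg hapow (by nlinarith)
      nlinarith [hmin, h6, h7, h3a]
    · have hmin : min ((2:ℝ) ^ (-p)) ((p - 1) * (2:ℝ) ^ (1 - p)) * b ^ p ≤
          (p - 1) * (2:ℝ) ^ (1 - p) * b ^ p :=
        mul_le_mul_of_nonneg_right (min_le_right _ _) (Real.rpow_nonneg hb.le _)
      have h8 : (b / 2) ^ (p - 1) * ((p - 1) * b) ≤ a ^ (p - 1) * (p * b - a) := by
        apply mul_le_mul
        · exact Real.rpow_le_rpow (by linarith) (by linarith) (by linarith)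
        · nlinarith
        · nlinarith
        · exact hapow
      have h9 : (b / 2) ^ (p - 1) * ((p - 1) * b) = (p - 1) * (2:ℝ) ^ (1 - p) * b ^ p := by
        rw [div_rpow_eq _ _ _ hb.le (by norm_num), show -(p - 1) = 1 - p by ring]
        linear_combination (-((p - 1) * (2:ℝ) ^ (1 - p))) * h3b
      have h10 : (0:ℝ) ≤ (b - a) ^ p := Real.rpow_nonneg (by linarith) _
      nlinarith [hmin, h8, h9, h10, h3a]
  · -- upper bound
    have h1 : (b - a) ^ p ≤ b ^ p :=
      Real.rpow_le_rpow (by linarith) (by linarith) (by linarith)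
    have h2 : a ^ (p - 1) ≤ b ^ (p - 1) :=
      Real.rpow_le_rpow ha.le hab (by linarith)
    have h4 : p * a ^ (p - 1) * b ≤ p * b ^ (p - 1) * b :=
      mul_le_mul_of_nonneg_right (mul_le_mul_of_nonneg_left h2 (by linarith)) hb.le
    have h5 : (0:ℝ) ≤ a ^ p := Real.rpow_nonneg ha.le _
    nlinarith [h1, h4, h5, h3b]
end
section
variable {p a b s : ℝ}

lemma est_upper_le2_small (hp : 1 < p) (hp2 : p ≤ 2) (ha : 0 < a) (hb : 0 < b)
    (hs : |s| ≤ a * b) (hab : a < 2 * b) :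
    (a ^ 2 + 2 * s + b ^ 2) ^ (p / 2) - a ^ p - p * a ^ (p - 2) * s ≤
      ((3:ℝ) ^ p + p * (2:ℝ) ^ (p - 1)) * (3:ℝ) ^ (2 - p) * (b ^ 2 * (b + a) ^ (p - 2)) := by
  have habs := abs_le.mp hs
  have hbase : (0:ℝ) ≤ a ^ 2 + 2 * s + b ^ 2 := by nlinarith [sq_nonneg (a - b), habs.1]
  -- first term
  have h1 : (a ^ 2 + 2 * s + b ^ 2) ^ (p / 2) ≤ (3:ℝ) ^ p * b ^ p := by
    calc (a ^ 2 + 2 * s + b ^ 2) ^ (p / 2) ≤ ((3 * b) ^ 2) ^ (p / 2) :=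
          Real.rpow_le_rpow hbase (by nlinarith [habs.2]) (by linarith)
      _ = (3 * b) ^ p := by
          rw [sq_rpow _ _ (by linarith : (0:ℝ) ≤ 3 * b), show 2 * (p / 2) = p by ring]
      _ = (3:ℝ) ^ p * b ^ p := Real.mul_rpow (by norm_num) hb.le
  -- inner-product term
  have hpa : a ^ (p - 2) * a = a ^ (p - 1) := by
    have h := Real.rpow_add ha (p - 2) 1
    rw [Real.rpow_one] at h
    rw [show p - 2 + 1 = p - 1 by ring] at h
    exact h.symm
  have h2 : -(p * a ^ (p - 2) * s) ≤ p * (2:ℝ) ^ (p - 1) * b ^ p := by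
    have h21 : -(p * a ^ (p - 2) * s) ≤ p * a ^ (p - 2) * (a * b) := by
      have := mul_le_mul_of_nonneg_left habs.1
        (mul_nonneg (by linarith : (0:ℝ) ≤ p) (Real.rpow_nonneg ha.le (p - 2)))
      nlinarith [this]
    have h22 : a ^ (p - 1) ≤ (2:ℝ) ^ (p - 1) * b ^ (p - 1) := by
      calc a ^ (p - 1) ≤ (2 * b) ^ (p - 1) :=
            Real.rpow_le_rpow ha.le hab.le (by linarith)
        _ = (2:ℝ) ^ (p - 1) * b ^ (p - 1) := Real.mul_rpow (by norm_num) hb.le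
    have h3b : b ^ (p - 1) * b = b ^ p := by
      have h := Real.rpow_add hb (p - 1) 1
      rw [Real.rpow_one] at h
      rw [show p - 1 + 1 = p by ring] at h
      exact h.symm
    have h23 : p * a ^ (p - 2) * (a * b) = p * (a ^ (p - 1) * b) := by
      rw [← hpa]; ring
    have h24 : a ^ (p - 1) * b ≤ (2:ℝ) ^ (p - 1) * b ^ p := by
      calc a ^ (p - 1) * b ≤ ((2:ℝ) ^ (p - 1) * b ^ (p - 1)) * b :=
            mul_le_mul_of_nonneg_right h22 hb.le
        _ = (2:ℝ) ^ (p - 1) * b ^ p := by rw [mul_assoc, h3b]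
    calc -(p * a ^ (p - 2) * s) ≤ p * a ^ (p - 2) * (a * b) := h21
      _ = p * (a ^ (p - 1) * b) := h23
      _ ≤ p * ((2:ℝ) ^ (p - 1) * b ^ p) :=
          mul_le_mul_of_nonneg_left h24 (by linarith)
      _ = p * (2:ℝ) ^ (p - 1) * b ^ p := by ring
  have h3 : (0:ℝ) ≤ a ^ p := Real.rpow_nonneg ha.le _
  -- conversion of b^p
  have h32 : (3:ℝ) ^ (2 - p) * (3:ℝ) ^ (p - 2) = 1 := by
    rw [← Real.rpow_add (by norm_num)]; norm_num
  have hconv : b ^ p ≤ (3:ℝ) ^ (2 - p) * (b ^ 2 * (b + a) ^ (p - 2)) := by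
    have hc1 : (3 * b) ^ (p - 2) ≤ (b + a) ^ (p - 2) :=
      Real.rpow_le_rpow_of_nonpos (by linarith) (by linarith) (by linarith)
    rw [Real.mul_rpow (by norm_num) hb.le] at hc1
    have hc2 : b ^ 2 * ((3:ℝ) ^ (p - 2) * b ^ (p - 2)) ≤ b ^ 2 * (b + a) ^ (p - 2) :=
      mul_le_mul_of_nonneg_left hc1 (sq_nonneg b)
    have hc3 : b ^ 2 * b ^ (p - 2) = b ^ p := by
      rw [← Real.rpow_natCast b 2, ← Real.rpow_add hb]
      norm_num
    have hc4 := mul_le_mul_of_nonneg_left hc2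
      (Real.rpow_nonneg (by norm_num : (0:ℝ) ≤ 3) (2 - p))
    calc b ^ p = (3:ℝ) ^ (2 - p) * (b ^ 2 * ((3:ℝ) ^ (p - 2) * b ^ (p - 2))) := by
          linear_combination (-(b ^ p)) * h32 - ((3:ℝ) ^ (2 - p) * (3:ℝ) ^ (p - 2)) * hc3
      _ ≤ (3:ℝ) ^ (2 - p) * (b ^ 2 * (b + a) ^ (p - 2)) := hc4
  have hcoef : (0:ℝ) ≤ (3:ℝ) ^ p + p * (2:ℝ) ^ (p - 1) := by
    have := Real.rpow_nonneg (by norm_num : (0:ℝ) ≤ 3) p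
    have := Real.rpow_nonneg (by norm_num : (0:ℝ) ≤ 2) (p - 1)
    nlinarith
  have hfin := mul_le_mul_of_nonneg_left hconv hcoef
  nlinarith [h1, h2, h3, hfin]
end
private lemma b2_mul (b : ℝ) (hb : 0 < b) (p : ℝ) : b ^ 2 * b ^ (p - 2) = b ^ p := by
  rw [← Real.rpow_natCast b 2, ← Real.rpow_add hb]
  norm_num

private lemma two2_cancel (p : ℝ) : (2:ℝ) ^ (2 - p) * (2:ℝ) ^ (p - 2) = 1 := by
  rw [← Real.rpow_add (by norm_num)]; norm_num

private lemma conv1 {p b x : ℝ} (hb : 0 < b) (hx : b ≤ x) (h2 : p - 2 ≤ 0) :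
    b ^ 2 * x ^ (p - 2) ≤ b ^ p := by
  have h := Real.rpow_le_rpow_of_nonpos hb hx h2
  calc b ^ 2 * x ^ (p - 2) ≤ b ^ 2 * b ^ (p - 2) :=
        mul_le_mul_of_nonneg_left h (sq_nonneg b)
    _ = b ^ p := b2_mul b hb p

private lemma conv2 {p b x : ℝ} (hb : 0 < b) (hbx : 0 < x) (hx : x ≤ 2 * b) (h2 : p - 2 ≤ 0) :
    b ^ p ≤ (2:ℝ) ^ (2 - p) * (b ^ 2 * x ^ (p - 2)) := by
  have h : (2 * b) ^ (p - 2) ≤ x ^ (p - 2) := Real.rpow_le_rpow_of_nonpos hbx hx h2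
  rw [Real.mul_rpow (by norm_num) hb.le] at h
  have h1 : b ^ 2 * ((2:ℝ) ^ (p - 2) * b ^ (p - 2)) ≤ b ^ 2 * x ^ (p - 2) :=
    mul_le_mul_of_nonneg_left h (sq_nonneg b)
  have h2' := mul_le_mul_of_nonneg_left h1 (Real.rpow_nonneg (by norm_num : (0:ℝ) ≤ 2) (2 - p))
  have hb2 := b2_mul b hb p
  have h22 := two2_cancel p
  calc b ^ p = (2:ℝ) ^ (2 - p) * (b ^ 2 * ((2:ℝ) ^ (p - 2) * b ^ (p - 2))) := by
        linear_combination (-(b ^ p)) * h22 - ((2:ℝ) ^ (2 - p) * (2:ℝ) ^ (p - 2)) * hb2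
    _ ≤ (2:ℝ) ^ (2 - p) * (b ^ 2 * x ^ (p - 2)) := h2'

private lemma conv3 {p b x : ℝ} (hb : 0 < b) (hbx : 0 ≤ x) (hx : x ≤ 2 * b) (h2 : 0 ≤ p - 2) :
    (2:ℝ) ^ (2 - p) * (b ^ 2 * x ^ (p - 2)) ≤ b ^ p := by
  have h : x ^ (p - 2) ≤ (2 * b) ^ (p - 2) := Real.rpow_le_rpow hbx hx h2
  rw [Real.mul_rpow (by norm_num) hb.le] at h
  have h1 : b ^ 2 * x ^ (p - 2) ≤ b ^ 2 * ((2:ℝ) ^ (p - 2) * b ^ (p - 2)) :=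
    mul_le_mul_of_nonneg_left h (sq_nonneg b)
  have h2' := mul_le_mul_of_nonneg_left h1 (Real.rpow_nonneg (by norm_num : (0:ℝ) ≤ 2) (2 - p))
  have hb2 := b2_mul b hb p
  have h22 := two2_cancel p
  calc (2:ℝ) ^ (2 - p) * (b ^ 2 * x ^ (p - 2))
      ≤ (2:ℝ) ^ (2 - p) * (b ^ 2 * ((2:ℝ) ^ (p - 2) * b ^ (p - 2))) := h2'
    _ = b ^ p := by
        linear_combination (b ^ p) * h22 + ((2:ℝ) ^ (2 - p) * (2:ℝ) ^ (p - 2)) * hb2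

private lemma conv4 {p b x : ℝ} (hb : 0 < b) (hx : b ≤ x) (h2 : 0 ≤ p - 2) :
    b ^ p ≤ b ^ 2 * x ^ (p - 2) := by
  have h := Real.rpow_le_rpow hb.le hx h2
  calc b ^ p = b ^ 2 * b ^ (p - 2) := (b2_mul b hb p).symm
    _ ≤ b ^ 2 * x ^ (p - 2) := mul_le_mul_of_nonneg_left h (sq_nonneg b)

lemma scalar_key (p : ℝ) (hp : 1 < p) :
    ∃ c C : ℝ, 0 < c ∧ 0 < C ∧ ∀ a b s : ℝ, 0 ≤ a → 0 ≤ b → |s| ≤ a * b →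
      c * b ^ 2 * (b + a) ^ (p - 2) ≤
          (a ^ 2 + 2 * s + b ^ 2) ^ (p / 2) - a ^ p - p * a ^ (p - 2) * s ∧
        (a ^ 2 + 2 * s + b ^ 2) ^ (p / 2) - a ^ p - p * a ^ (p - 2) * s ≤
          C * b ^ 2 * (b + a) ^ (p - 2) := by
  have hp0 : 0 < p := by linarith
  set c0 : ℝ := min ((2:ℝ) ^ (-p)) ((p - 1) * (2:ℝ) ^ (1 - p)) with hc0def
  have hc0 : 0 < c0 :=
    lt_min (Real.rpow_pos_of_pos (by norm_num) _)
      (mul_pos (by linarith) (Real.rpow_pos_of_pos (by norm_num) _))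
  refine ⟨min 1 (min (p * (p - 1) / 2) (min (p * (3:ℝ) ^ (2 - p) / 2)
      (min (p * (4:ℝ) ^ (2 - p) * (3:ℝ) ^ (2 - p) / 64)
        (min c0 (c0 * (2:ℝ) ^ (2 - p)))))),
    max 1 (max (p * (p - 1) / 2) (max (p * (3:ℝ) ^ (2 - p) / 2)
      (max (((3:ℝ) ^ p + p * (2:ℝ) ^ (p - 1)) * (3:ℝ) ^ (2 - p))
        (max (1 + p) ((1 + p) * (2:ℝ) ^ (2 - p)))))), ?_, ?_, ?_⟩
  · refine lt_min one_pos (lt_min (by nlinarith) (lt_min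
      (by positivity) (lt_min (by positivity) (lt_min hc0 (by positivity)))))
  · exact lt_of_lt_of_le one_pos (le_max_left _ _)
  set c := min 1 (min (p * (p - 1) / 2) (min (p * (3:ℝ) ^ (2 - p) / 2)
      (min (p * (4:ℝ) ^ (2 - p) * (3:ℝ) ^ (2 - p) / 64)
        (min c0 (c0 * (2:ℝ) ^ (2 - p)))))) with hcdef
  set C := max 1 (max (p * (p - 1) / 2) (max (p * (3:ℝ) ^ (2 - p) / 2)
      (max (((3:ℝ) ^ p + p * (2:ℝ) ^ (p - 1)) * (3:ℝ) ^ (2 - p))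
        (max (1 + p) ((1 + p) * (2:ℝ) ^ (2 - p)))))) with hCdef
  have hc1 : c ≤ 1 := min_le_left _ _
  have hc2 : c ≤ p * (p - 1) / 2 := (min_le_right _ _).trans (min_le_left _ _)
  have hc3 : c ≤ p * (3:ℝ) ^ (2 - p) / 2 :=
    (min_le_right _ _).trans ((min_le_right _ _).trans (min_le_left _ _))
  have hc4 : c ≤ p * (4:ℝ) ^ (2 - p) * (3:ℝ) ^ (2 - p) / 64 :=
    (min_le_right _ _).trans ((min_le_right _ _).trans
      ((min_le_right _ _).trans (min_le_left _ _)))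
  have hc5 : c ≤ c0 :=
    (min_le_right _ _).trans ((min_le_right _ _).trans
      ((min_le_right _ _).trans ((min_le_right _ _).trans (min_le_left _ _))))
  have hc6 : c ≤ c0 * (2:ℝ) ^ (2 - p) :=
    (min_le_right _ _).trans ((min_le_right _ _).trans
      ((min_le_right _ _).trans ((min_le_right _ _).trans (min_le_right _ _))))
  have hC1 : (1:ℝ) ≤ C := le_max_left _ _
  have hC2 : p * (p - 1) / 2 ≤ C := (le_max_left _ _).trans (le_max_right _ _)
  have hC3 : p * (3:ℝ) ^ (2 - p) / 2 ≤ C :=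
    ((le_max_left _ _).trans (le_max_right _ _)).trans (le_max_right _ _)
  have hC4 : ((3:ℝ) ^ p + p * (2:ℝ) ^ (p - 1)) * (3:ℝ) ^ (2 - p) ≤ C :=
    (((le_max_left _ _).trans (le_max_right _ _)).trans (le_max_right _ _)).trans
      (le_max_right _ _)
  have hC5 : 1 + p ≤ C :=
    ((((le_max_left _ _).trans (le_max_right _ _)).trans (le_max_right _ _)).trans
      (le_max_right _ _)).trans (le_max_right _ _)
  have hC6 : (1 + p) * (2:ℝ) ^ (2 - p) ≤ C :=
    ((((le_max_right _ _).trans (le_max_right _ _)).trans (le_max_right _ _)).trans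
      (le_max_right _ _)).trans (le_max_right _ _)
  intro a b s ha hb hs
  have hX : (0:ℝ) ≤ b ^ 2 * (b + a) ^ (p - 2) :=
    mul_nonneg (sq_nonneg b) (Real.rpow_nonneg (by linarith) _)
  rcases eq_or_lt_of_le hb with hb0 | hb0
  · -- b = 0
    have hs0 : s = 0 := by
      have : |s| ≤ 0 := by rw [← hb0] at hs; simpa using hs
      exact abs_eq_zero.mp (le_antisymm this (abs_nonneg s))
    subst hs0
    rw [← hb0]
    have hmid : (a ^ 2 + 2 * 0 + (0:ℝ) ^ 2) ^ (p / 2) - a ^ p - p * a ^ (p - 2) * 0 = 0 := by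
      rw [show a ^ 2 + 2 * 0 + (0:ℝ) ^ 2 = a ^ 2 by ring, sq_rpow a _ ha,
        show 2 * (p / 2) = p by ring]
      ring
    rw [hmid]
    norm_num
  · -- b > 0
    rcases eq_or_lt_of_le ha with ha0 | ha0
    · -- a = 0
      have hs0 : s = 0 := by
        have : |s| ≤ 0 := by rw [← ha0] at hs; simpa using hs
        exact abs_eq_zero.mp (le_antisymm this (abs_nonneg s))
      subst hs0
      rw [← ha0]
      have hmid : ((0:ℝ) ^ 2 + 2 * 0 + b ^ 2) ^ (p / 2) - (0:ℝ) ^ p - p * (0:ℝ) ^ (p - 2) * 0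
          = b ^ p := by
        rw [show (0:ℝ) ^ 2 + 2 * 0 + b ^ 2 = b ^ 2 by ring, sq_rpow b _ hb0.le,
          show 2 * (p / 2) = p by ring, Real.zero_rpow (by linarith : p ≠ 0)]
        ring
      rw [hmid, add_zero]
      have hb2 := b2_mul b hb0 p
      have hbp : (0:ℝ) < b ^ p := Real.rpow_pos_of_pos hb0 p
      constructor
      · calc c * b ^ 2 * b ^ (p - 2) = c * (b ^ 2 * b ^ (p - 2)) := by ring
          _ = c * b ^ p := by rw [hb2]
          _ ≤ 1 * b ^ p := mul_le_mul_of_nonneg_right hc1 hbp.le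
          _ = b ^ p := one_mul _
      · calc b ^ p = 1 * b ^ p := (one_mul _).symm
          _ ≤ C * b ^ p := mul_le_mul_of_nonneg_right hC1 hbp.le
          _ = C * (b ^ 2 * b ^ (p - 2)) := by rw [hb2]
          _ = C * b ^ 2 * b ^ (p - 2) := by ring
    · -- a > 0, b > 0
      by_cases hdeg : s = -(a * b) ∧ a ≤ b
      · -- degenerate case
        obtain ⟨hs1, hab⟩ := hdeg
        subst hs1
        have hpa : a ^ (p - 2) * a = a ^ (p - 1) := by
          have h := Real.rpow_add ha0 (p - 2) 1
          rw [Real.rpow_one] at h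
          rw [show p - 2 + 1 = p - 1 by ring] at h
          exact h.symm
        have hmid : (a ^ 2 + 2 * -(a * b) + b ^ 2) ^ (p / 2) - a ^ p -
            p * a ^ (p - 2) * -(a * b) = (b - a) ^ p - a ^ p + p * a ^ (p - 1) * b := by
          rw [show a ^ 2 + 2 * -(a * b) + b ^ 2 = (b - a) ^ 2 by ring,
            sq_rpow _ _ (by linarith : (0:ℝ) ≤ b - a), show 2 * (p / 2) = p by ring]
          linear_combination (p * b) * hpa
        rw [hmid]
        obtain ⟨hdlow, hdup⟩ := est_degenerate hp ha0 hab
        rcases le_or_gt p 2 with hp2 | hp2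
        · constructor
          · have hcv : b ^ 2 * (b + a) ^ (p - 2) ≤ b ^ p :=
              conv1 hb0 (by linarith) (by linarith)
            calc c * b ^ 2 * (b + a) ^ (p - 2) = c * (b ^ 2 * (b + a) ^ (p - 2)) := by ring
              _ ≤ c0 * (b ^ 2 * (b + a) ^ (p - 2)) := mul_le_mul_of_nonneg_right hc5 hX
              _ ≤ c0 * b ^ p := mul_le_mul_of_nonneg_left hcv hc0.le
              _ ≤ (b - a) ^ p - a ^ p + p * a ^ (p - 1) * b := hdlow
          · have hcv : b ^ p ≤ (2:ℝ) ^ (2 - p) * (b ^ 2 * (b + a) ^ (p - 2)) :=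
              conv2 hb0 (by linarith) (by linarith) (by linarith)
            calc (b - a) ^ p - a ^ p + p * a ^ (p - 1) * b ≤ (1 + p) * b ^ p := hdup
              _ ≤ (1 + p) * ((2:ℝ) ^ (2 - p) * (b ^ 2 * (b + a) ^ (p - 2))) :=
                  mul_le_mul_of_nonneg_left hcv (by linarith)
              _ = (1 + p) * (2:ℝ) ^ (2 - p) * (b ^ 2 * (b + a) ^ (p - 2)) := by ring
              _ ≤ C * (b ^ 2 * (b + a) ^ (p - 2)) := mul_le_mul_of_nonneg_right hC6 hX
              _ = C * b ^ 2 * (b + a) ^ (p - 2) := by ring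
        · constructor
          · have hcv : (2:ℝ) ^ (2 - p) * (b ^ 2 * (b + a) ^ (p - 2)) ≤ b ^ p :=
              conv3 hb0 (by linarith) (by linarith) (by linarith)
            calc c * b ^ 2 * (b + a) ^ (p - 2) = c * (b ^ 2 * (b + a) ^ (p - 2)) := by ring
              _ ≤ (c0 * (2:ℝ) ^ (2 - p)) * (b ^ 2 * (b + a) ^ (p - 2)) :=
                  mul_le_mul_of_nonneg_right hc6 hX
              _ = c0 * ((2:ℝ) ^ (2 - p) * (b ^ 2 * (b + a) ^ (p - 2))) := by ring
              _ ≤ c0 * b ^ p := mul_le_mul_of_nonneg_left hcv hc0.le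
              _ ≤ (b - a) ^ p - a ^ p + p * a ^ (p - 1) * b := hdlow
          · have hcv : b ^ p ≤ b ^ 2 * (b + a) ^ (p - 2) :=
              conv4 hb0 (by linarith) (by linarith)
            calc (b - a) ^ p - a ^ p + p * a ^ (p - 1) * b ≤ (1 + p) * b ^ p := hdup
              _ ≤ (1 + p) * (b ^ 2 * (b + a) ^ (p - 2)) :=
                  mul_le_mul_of_nonneg_left hcv (by linarith)
              _ ≤ C * (b ^ 2 * (b + a) ^ (p - 2)) := mul_le_mul_of_nonneg_right hC5 hX
              _ = C * b ^ 2 * (b + a) ^ (p - 2) := by ring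
      · -- nondegenerate case : qf > 0 on [0,1]
        have habs := abs_le.mp hs
        have hqpos : ∀ t ∈ Icc (0:ℝ) 1, 0 < qf a b s t := by
          intro t ht
          unfold qf
          by_cases hsab : s = -(a * b)
          · have hba' : b < a := by
              by_contra hcon
              exact hdeg ⟨hsab, le_of_not_gt hcon⟩
            subst hsab
            have h1 : a - b ≤ a - b * t := by
              nlinarith [mul_le_of_le_one_right hb0.le ht.2]
            nlinarith [mul_pos (show (0:ℝ) < a - b * t by linarith)
              (show (0:ℝ) < a - b * t by linarith)]
          · have hsgt : -(a * b) < s := lt_of_le_of_ne habs.1 (Ne.symm (by simpa using hsab))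
            rcases eq_or_lt_of_le ht.1 with ht0 | ht0
            · rw [← ht0]; nlinarith
            · nlinarith [sq_nonneg (a - b * t), mul_pos ht0 (show (0:ℝ) < s + a * b by linarith)]
        have hDeq : ff p a b s 1 - ff p a b s 0 - ff' p a b s 0 =
            (a ^ 2 + 2 * s + b ^ 2) ^ (p / 2) - a ^ p - p * a ^ (p - 2) * s := by
          rw [ff_one, ff_zero ha, ff'_zero ha]
        rcases le_or_gt p 2 with hp2 | hp2
        · constructor
          · have est := est_lower_le2 hp hp2 ha0 hb0 hs hqpos
            rw [hDeq] at est
            calc c * b ^ 2 * (b + a) ^ (p - 2) = c * (b ^ 2 * (b + a) ^ (p - 2)) := by ring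
              _ ≤ p * (p - 1) / 2 * (b ^ 2 * (b + a) ^ (p - 2)) :=
                  mul_le_mul_of_nonneg_right hc2 hX
              _ ≤ _ := est
          · rcases le_or_gt (2 * b) a with hab | hab
            · have est := est_upper_le2_big hp hp2 ha0 hb0 hs hab hqpos
              rw [hDeq] at est
              calc (a ^ 2 + 2 * s + b ^ 2) ^ (p / 2) - a ^ p - p * a ^ (p - 2) * s
                  ≤ p * (3:ℝ) ^ (2 - p) / 2 * (b ^ 2 * (b + a) ^ (p - 2)) := est
                _ ≤ C * (b ^ 2 * (b + a) ^ (p - 2)) := mul_le_mul_of_nonneg_right hC3 hX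
                _ = C * b ^ 2 * (b + a) ^ (p - 2) := by ring
            · have est := est_upper_le2_small hp hp2 ha0 hb0 hs hab
              calc (a ^ 2 + 2 * s + b ^ 2) ^ (p / 2) - a ^ p - p * a ^ (p - 2) * s
                  ≤ ((3:ℝ) ^ p + p * (2:ℝ) ^ (p - 1)) * (3:ℝ) ^ (2 - p) *
                    (b ^ 2 * (b + a) ^ (p - 2)) := est
                _ ≤ C * (b ^ 2 * (b + a) ^ (p - 2)) := mul_le_mul_of_nonneg_right hC4 hX
                _ = C * b ^ 2 * (b + a) ^ (p - 2) := by ring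
        · have hp2' : 2 ≤ p := hp2.le
          constructor
          · rcases le_or_gt (2 * b) a with hab | hab
            · have est := est_lower_ge2_big hp hp2' ha0 hb0 hs hab hqpos
              rw [hDeq] at est
              calc c * b ^ 2 * (b + a) ^ (p - 2) = c * (b ^ 2 * (b + a) ^ (p - 2)) := by ring
                _ ≤ p * (3:ℝ) ^ (2 - p) / 2 * (b ^ 2 * (b + a) ^ (p - 2)) :=
                    mul_le_mul_of_nonneg_right hc3 hX
                _ ≤ _ := est
            · have est := est_lower_ge2_small hp hp2' ha0 hb0 hs hab hqpos
              rw [hDeq] at est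
              calc c * b ^ 2 * (b + a) ^ (p - 2) = c * (b ^ 2 * (b + a) ^ (p - 2)) := by ring
                _ ≤ p * (4:ℝ) ^ (2 - p) * (3:ℝ) ^ (2 - p) / 64 *
                    (b ^ 2 * (b + a) ^ (p - 2)) := mul_le_mul_of_nonneg_right hc4 hX
                _ ≤ _ := est
          · have est := est_upper_ge2 hp hp2' ha0 hb0 hs hqpos
            rw [hDeq] at est
            calc (a ^ 2 + 2 * s + b ^ 2) ^ (p / 2) - a ^ p - p * a ^ (p - 2) * s
                ≤ p * (p - 1) / 2 * (b ^ 2 * (b + a) ^ (p - 2)) := est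
              _ ≤ C * (b ^ 2 * (b + a) ^ (p - 2)) := mul_le_mul_of_nonneg_right hC2 hX
              _ = C * b ^ 2 * (b + a) ^ (p - 2) := by ring

open scoped RealInnerProductSpace

/-- Two-sided estimate for the Bregman distance of `ξ ↦ |ξ|^p` on ℝⁿ. -/
theorem bregman_euclidean_two_sided (p : ℝ) (hp : 1 < p) :
    ∃ c C : ℝ, 0 < c ∧ 0 < C ∧
      ∀ (n : ℕ) (ξ η : EuclideanSpace ℝ (Fin n)),
        c * ‖η‖ ^ 2 * (‖η‖ + ‖ξ‖) ^ (p - 2) ≤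
            ‖ξ + η‖ ^ p - ‖ξ‖ ^ p - p * ‖ξ‖ ^ (p - 2) * ⟪ξ, η⟫ ∧
          ‖ξ + η‖ ^ p - ‖ξ‖ ^ p - p * ‖ξ‖ ^ (p - 2) * ⟪ξ, η⟫ ≤
            C * ‖η‖ ^ 2 * (‖η‖ + ‖ξ‖) ^ (p - 2) := by
  obtain ⟨c, C, hc, hC, h⟩ := scalar_key p hp
  refine ⟨c, C, hc, hC, fun n ξ η => ?_⟩
  have key := h ‖ξ‖ ‖η‖ ⟪ξ, η⟫ (norm_nonneg ξ) (norm_nonneg η) (abs_real_inner_le_norm ξ η)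
  have hnorm : ‖ξ + η‖ ^ p = (‖ξ‖ ^ 2 + 2 * ⟪ξ, η⟫ + ‖η‖ ^ 2) ^ (p / 2) := by
    rw [← norm_add_sq_real, sq_rpow _ _ (norm_nonneg _), show 2 * (p / 2) = p by ring]
  rw [hnorm]
  exact key
end

section
/- Fix 1 < p < ∞ and positive weights a₁, …, aₙ > 0. Define |ξ|_{p,a}^p := Σᵢ aᵢ|ξᵢ|^p. Then there exist positive constants c(p), C(p) such that for all ξ, η ∈ ℝⁿ, c(p)·Σᵢ aᵢ^{2/p}|ηᵢ|²·(aᵢ^{1/p}|ηᵢ| + aᵢ^{1/p}|ξᵢ|)^{p-2} ≤ |ξ+η|_{p,a}^p − |ξ|_{p,a}^p − p·Σᵢ aᵢ|ξᵢ|^{p-2}ξᵢηᵢ ≤ C(p)·Σᵢ aᵢ^{2/p}|ηᵢ|²·(aᵢ^{1/p}|ηᵢ| + aᵢ^{1/p}|ξᵢ|)^{p-2}. -/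
open Real Set

namespace BregAux


noncomputable def D (p x y : ℝ) : ℝ := |x + y| ^ p - |x| ^ p - p * |x| ^ (p - 2) * x * y

lemma hasDerivAt_psi {p : ℝ} (hp : 1 < p) {u : ℝ} (hu : u ≠ 0) :
    HasDerivAt (fun v : ℝ => p * |v| ^ (p - 2) * v) (p * (p - 1) * |u| ^ (p - 2)) u := by
  have hp3 : p - 1 - 1 = p - 2 := by ring
  rcases hu.lt_or_gt with h | h
  · have hev : (fun v : ℝ => -(p * (-v) ^ (p - 1))) =ᶠ[nhds u]
        (fun v : ℝ => p * |v| ^ (p - 2) * v) := by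
      filter_upwards [Iio_mem_nhds h] with v hv
      rw [abs_of_neg hv, show p - 1 = p - 2 + 1 by ring,
        Real.rpow_add_one (neg_ne_zero.2 hv.ne) (p - 2)]
      ring
    have h1 : HasDerivAt (fun v : ℝ => -v) (-1 : ℝ) u := (hasDerivAt_id u).neg
    have hd : HasDerivAt (fun v : ℝ => (-v) ^ (p - 1)) ((p - 1) * (-u) ^ (p - 1 - 1) * (-1)) u :=
      (Real.hasDerivAt_rpow_const (p := p - 1) (Or.inl (neg_ne_zero.2 hu))).comp u h1
    have := ((hd.const_mul p).neg).congr_of_eventuallyEq hev.symm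
    refine this.congr_deriv ?_
    rw [abs_of_neg h, hp3]
    ring
  · have hev : (fun v : ℝ => p * v ^ (p - 1)) =ᶠ[nhds u]
        (fun v : ℝ => p * |v| ^ (p - 2) * v) := by
      filter_upwards [Ioi_mem_nhds h] with v hv
      rw [abs_of_pos hv, show p - 1 = p - 2 + 1 by ring, Real.rpow_add_one hv.ne' (p - 2)]
      ring
    have hd : HasDerivAt (fun v : ℝ => v ^ (p - 1)) ((p - 1) * u ^ (p - 1 - 1)) u :=
      Real.hasDerivAt_rpow_const (Or.inl hu)
    have := (hd.const_mul p).congr_of_eventuallyEq hev.symm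
    refine this.congr_deriv ?_
    rw [abs_of_pos h, hp3]
    ring

lemma psi0_strictMono {p : ℝ} (hp : 1 < p) : StrictMono (fun v : ℝ => |v| ^ (p - 2) * v) := by
  have hp1 : (0 : ℝ) < p - 1 := by linarith
  have key : ∀ v : ℝ, 0 ≤ v → |v| ^ (p - 2) * v = v ^ (p - 1) := by
    intro v hv
    rcases hv.eq_or_lt with h | h
    · rw [← h]; simp [Real.zero_rpow hp1.ne']
    · rw [abs_of_pos h, show p - 1 = p - 2 + 1 by ring, Real.rpow_add_one h.ne' (p - 2)]
  have keyn : ∀ v : ℝ, v < 0 → |v| ^ (p - 2) * v = -((-v) ^ (p - 1)) := by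
    intro v hv
    rw [abs_of_neg hv, show p - 1 = p - 2 + 1 by ring,
      Real.rpow_add_one (neg_ne_zero.2 hv.ne) (p - 2)]
    ring
  intro u v huv
  simp only
  rcases le_or_gt 0 u with hu | hu
  · rw [key u hu, key v (hu.trans huv.le)]
    exact Real.rpow_lt_rpow hu huv hp1
  · rcases lt_or_ge v 0 with hv | hv
    · rw [keyn u hu, keyn v hv]
      have := Real.rpow_lt_rpow (by linarith : (0:ℝ) ≤ -v) (by linarith : -v < -u) hp1
      linarith
    · rw [keyn u hu, key v hv]
      have h1 : (0:ℝ) < (-u) ^ (p - 1) := Real.rpow_pos_of_pos (by linarith) _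
      have h2 : (0:ℝ) ≤ v ^ (p - 1) := Real.rpow_nonneg hv _
      linarith

lemma psi_continuous {p : ℝ} (hp : 1 < p) :
    Continuous (fun v : ℝ => p * |v| ^ (p - 2) * v) := by
  have h1 : ContDiff ℝ 1 (fun x : ℝ => ‖x‖ ^ p) := contDiff_norm_rpow hp
  have h2 : Continuous (deriv fun x : ℝ => ‖x‖ ^ p) := h1.continuous_deriv le_rfl
  have h3 : (deriv fun x : ℝ => ‖x‖ ^ p) = fun v : ℝ => p * |v| ^ (p - 2) * v := by
    funext v
    simp only [Real.norm_eq_abs]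
    exact (hasDerivAt_abs_rpow v hp).deriv
  rwa [h3] at h2

lemma D_pos {p : ℝ} (hp : 1 < p) (x : ℝ) {y : ℝ} (hy : y ≠ 0) : 0 < D p x y := by
  have hp0 : (0 : ℝ) < p := by linarith
  have hcont : ContinuousOn (fun v : ℝ => |v| ^ p) (univ : Set ℝ) :=
    (continuous_abs.rpow_const (fun _ => Or.inr hp0.le)).continuousOn
  have hmono : StrictMono (fun v : ℝ => p * |v| ^ (p - 2) * v) := by
    intro a b hab
    simp only [mul_assoc]
    exact mul_lt_mul_of_pos_left (psi0_strictMono hp hab) hp0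
  rcases hy.lt_or_gt with h | h
  · obtain ⟨c, hc, hceq⟩ := exists_hasDerivAt_eq_slope (fun v : ℝ => |v| ^ p)
      (fun v : ℝ => p * |v| ^ (p - 2) * v) (by linarith : x + y < x)
      (hcont.mono (subset_univ _)) (fun t _ => hasDerivAt_abs_rpow t hp)
    have hlt : p * |c| ^ (p - 2) * c < p * |x| ^ (p - 2) * x := hmono hc.2
    have heq : |x| ^ p - |x + y| ^ p = p * |c| ^ (p - 2) * c * (x - (x + y)) := by
      rw [hceq, div_mul_cancel₀ _ (by linarith : x - (x + y) ≠ 0)]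
    have : D p x y = (p * |x| ^ (p - 2) * x - p * |c| ^ (p - 2) * c) * (-y) := by
      unfold D; nlinarith [heq]
    rw [this]
    exact mul_pos (by linarith) (by linarith)
  · obtain ⟨c, hc, hceq⟩ := exists_hasDerivAt_eq_slope (fun v : ℝ => |v| ^ p)
      (fun v : ℝ => p * |v| ^ (p - 2) * v) (by linarith : x < x + y)
      (hcont.mono (subset_univ _)) (fun t _ => hasDerivAt_abs_rpow t hp)
    have hlt : p * |x| ^ (p - 2) * x < p * |c| ^ (p - 2) * c := hmono hc.1
    have heq : |x + y| ^ p - |x| ^ p = p * |c| ^ (p - 2) * c * (x + y - x) := by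
      rw [hceq, div_mul_cancel₀ _ (by linarith : x + y - x ≠ 0)]
    have : D p x y = (p * |c| ^ (p - 2) * c - p * |x| ^ (p - 2) * x) * y := by
      unfold D; nlinarith [heq]
    rw [this]
    exact mul_pos (by linarith) h


lemma D_symm (p x y : ℝ) : D p (-x) (-y) = D p x y := by
  unfold D
  rw [show -x + -y = -(x + y) by ring, abs_neg, abs_neg]
  ring

lemma D_scale {p l : ℝ} (hp : 1 < p) (hl : 0 < l) (x y : ℝ) :
    D p (l * x) (l * y) = l ^ p * D p x y := by
  have habs : ∀ u : ℝ, |l * u| = l * |u| := fun u => by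
    rw [abs_mul, abs_of_pos hl]
  have hmul : ∀ u : ℝ, (l * |u|) ^ p = l ^ p * |u| ^ p := fun u =>
    Real.mul_rpow hl.le (abs_nonneg u)
  have hl2 : l ^ (p - 2) * l * l = l ^ p := by
    rw [← Real.rpow_add_one hl.ne' (p - 2), ← Real.rpow_add_one hl.ne' (p - 2 + 1)]
    congr 1
    ring
  unfold D
  rw [show l * x + l * y = l * (x + y) by ring, habs, habs, hmul, hmul,
    Real.mul_rpow hl.le (abs_nonneg x), ← hl2]
  ring

lemma D_repr {p : ℝ} (hp : 1 < p) {x y : ℝ} (hxy : 2 * |y| ≤ |x|) :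
    ∃ ζ : ℝ, |x| / 2 ≤ |ζ| ∧ |ζ| ≤ |y| + |x| ∧
      D p x y = p * (p - 1) * |ζ| ^ (p - 2) * y ^ 2 / 2 := by
  rcases eq_or_ne y 0 with rfl | hy
  · refine ⟨x, by linarith [abs_nonneg x], by simp [abs_nonneg x], ?_⟩
    simp [D]
  have hy' : 0 < |y| := abs_pos.2 hy
  have hx' : 0 < |x| := by linarith
  have hne : ∀ t : ℝ, t ∈ Icc (0:ℝ) 1 → |x| / 2 ≤ |x + t * y| := by
    intro t ht
    have h1 : |t * y| ≤ |y| := by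
      rw [abs_mul, abs_of_nonneg ht.1]
      nlinarith [ht.2, abs_nonneg y]
    have h2 : |x| ≤ |x + t * y| + |t * y| := by
      calc |x| = |(x + t * y) + (-(t * y))| := by ring_nf
        _ ≤ |x + t * y| + |(-(t * y))| := abs_add_le _ _
        _ = |x + t * y| + |t * y| := by rw [abs_neg]
    linarith
  set Dv := D p x y with hD
  set G : ℝ → ℝ := fun t => |x + t * y| ^ p - |x| ^ p - p * |x| ^ (p - 2) * x * (t * y) - Dv * t ^ 2
    with hGdef
  set G' : ℝ → ℝ := fun t =>
      p * |x + t * y| ^ (p - 2) * (x + t * y) * y - p * |x| ^ (p - 2) * x * y - 2 * Dv * t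
    with hG'def
  have ha : ∀ t : ℝ, HasDerivAt (fun s : ℝ => x + s * y) y t := fun t => by
    simpa using ((hasDerivAt_id t).mul_const y).const_add x
  have hGd : ∀ t : ℝ, HasDerivAt G (G' t) t := by
    intro t
    have h1 : HasDerivAt (fun s : ℝ => |x + s * y| ^ p)
        (p * |x + t * y| ^ (p - 2) * (x + t * y) * y) t := by
      have := (hasDerivAt_abs_rpow (x + t * y) hp).comp t (ha t)
      exact this
    have h2 : HasDerivAt (fun s : ℝ => p * |x| ^ (p - 2) * x * (s * y))
        (p * |x| ^ (p - 2) * x * y) t := by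
      have := ((hasDerivAt_id t).mul_const y).const_mul (p * |x| ^ (p - 2) * x)
      simpa using this
    have h3 : HasDerivAt (fun s : ℝ => Dv * s ^ 2) (2 * Dv * t) t := by
      have := (hasDerivAt_pow 2 t).const_mul Dv
      refine this.congr_deriv ?_
      ring
    have := ((h1.sub_const (|x| ^ p)).sub h2).sub h3
    exact this
  have hG0 : G 0 = 0 := by simp [hGdef]
  have hG1 : G 1 = 0 := by
    simp only [hGdef, hD, D, one_mul, mul_one, one_pow]
    ring
  obtain ⟨θ, hθ, hθ0⟩ := exists_hasDerivAt_eq_zero zero_lt_one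
    (fun t _ => (hGd t).continuousAt.continuousWithinAt) (hG0.trans hG1.symm) (fun t _ => hGd t)
  have hG'0 : G' 0 = 0 := by simp [hG'def]
  have hsub : Icc (0:ℝ) θ ⊆ Icc (0:ℝ) 1 := Icc_subset_Icc le_rfl hθ.2.le
  have hGd2 : ∀ t ∈ Icc (0:ℝ) 1,
      HasDerivAt G' (p * (p - 1) * |x + t * y| ^ (p - 2) * y ^ 2 - 2 * Dv) t := by
    intro t ht
    have hne0 : x + t * y ≠ 0 := by
      intro h
      have := hne t ht
      rw [h] at this
      simp at this
      linarith
    have h1 : HasDerivAt (fun s : ℝ => p * |x + s * y| ^ (p - 2) * (x + s * y))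
        (p * (p - 1) * |x + t * y| ^ (p - 2) * y) t := by
      have := (hasDerivAt_psi hp hne0).comp t (ha t)
      exact this
    have h2 : HasDerivAt (fun s : ℝ => 2 * Dv * s) (2 * Dv) t := by
      simpa using (hasDerivAt_id t).const_mul (2 * Dv)
    have := ((h1.mul_const y).sub_const (p * |x| ^ (p - 2) * x * y)).sub h2
    refine this.congr_deriv ?_
    ring
  obtain ⟨ζt, hζt, hζ0⟩ := exists_hasDerivAt_eq_zero hθ.1
    (fun t ht => (hGd2 t (hsub ht)).continuousAt.continuousWithinAt)
    (hG'0.trans hθ0.symm)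
    (fun t ht => hGd2 t (hsub (Ioo_subset_Icc_self ht)))
  have hζmem : ζt ∈ Icc (0:ℝ) 1 := hsub (Ioo_subset_Icc_self hζt)
  refine ⟨x + ζt * y, hne ζt hζmem, ?_, ?_⟩
  · have h1 : |ζt * y| ≤ |y| := by
      rw [abs_mul, abs_of_nonneg hζmem.1]
      nlinarith [hζmem.2, abs_nonneg y]
    calc |x + ζt * y| ≤ |x| + |ζt * y| := abs_add_le _ _
      _ ≤ |y| + |x| := by linarith
  · have := hζ0
    -- p * (p-1) * |x + ζt*y|^(p-2) * y^2 - 2*Dv = 0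
    rw [hD] at *
    linarith [hζ0]
lemma rpow_pin {q S u : ℝ} (hS : 0 < S) (h1 : S / 3 ≤ u) (h2 : u ≤ S) :
    min ((3:ℝ) ^ (-q)) 1 * S ^ q ≤ u ^ q ∧ u ^ q ≤ max ((3:ℝ) ^ (-q)) 1 * S ^ q := by
  have hu : 0 < u := lt_of_lt_of_le (by linarith) h1
  have hSq : (0:ℝ) < S ^ q := Real.rpow_pos_of_pos hS q
  have hdiv : (S / 3) ^ q = (3:ℝ) ^ (-q) * S ^ q := by
    rw [Real.div_rpow hS.le (by norm_num), Real.rpow_neg (by norm_num)]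
    ring
  rcases le_or_gt 0 q with hq | hq
  · constructor
    · calc min ((3:ℝ) ^ (-q)) 1 * S ^ q ≤ (3:ℝ) ^ (-q) * S ^ q :=
          mul_le_mul_of_nonneg_right (min_le_left _ _) hSq.le
        _ = (S / 3) ^ q := hdiv.symm
        _ ≤ u ^ q := Real.rpow_le_rpow (by positivity) h1 hq
    · calc u ^ q ≤ S ^ q := Real.rpow_le_rpow hu.le h2 hq
        _ = 1 * S ^ q := (one_mul _).symm
        _ ≤ max ((3:ℝ) ^ (-q)) 1 * S ^ q :=
          mul_le_mul_of_nonneg_right (le_max_right _ _) hSq.le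
  · constructor
    · calc min ((3:ℝ) ^ (-q)) 1 * S ^ q ≤ 1 * S ^ q :=
          mul_le_mul_of_nonneg_right (min_le_right _ _) hSq.le
        _ = S ^ q := one_mul _
        _ ≤ u ^ q := Real.rpow_le_rpow_of_nonpos hu h2 hq.le
    · calc u ^ q ≤ (S / 3) ^ q := Real.rpow_le_rpow_of_nonpos (by linarith) h1 hq.le
        _ = (3:ℝ) ^ (-q) * S ^ q := hdiv
        _ ≤ max ((3:ℝ) ^ (-q)) 1 * S ^ q :=
          mul_le_mul_of_nonneg_right (le_max_left _ _) hSq.le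

lemma lemB {p : ℝ} (hp : 1 < p) : ∃ cB CB : ℝ, 0 < cB ∧ 0 < CB ∧
    ∀ x y : ℝ, |x| ≤ 2 * |y| → cB * |y| ^ p ≤ D p x y ∧ D p x y ≤ CB * |y| ^ p := by
  have hgc : Continuous (fun x : ℝ => D p x 1) := by
    have c1 : Continuous (fun x : ℝ => |x + 1| ^ p) :=
      (continuous_abs.comp (continuous_id.add continuous_const)).rpow_const
        (fun _ => Or.inr (by linarith))
    have c2 : Continuous (fun x : ℝ => |x| ^ p) :=
      continuous_abs.rpow_const (fun _ => Or.inr (by linarith))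
    have c3 : Continuous (fun x : ℝ => p * |x| ^ (p - 2) * x * 1) :=
      (psi_continuous hp).mul continuous_const
    exact (c1.sub c2).sub c3
  obtain ⟨x₀, hx₀m, hx₀⟩ := isCompact_Icc.exists_isMinOn (⟨0, by norm_num⟩ :
    (Icc (-2:ℝ) 2).Nonempty) hgc.continuousOn
  obtain ⟨x₁, hx₁m, hx₁⟩ := isCompact_Icc.exists_isMaxOn (⟨0, by norm_num⟩ :
    (Icc (-2:ℝ) 2).Nonempty) hgc.continuousOn
  refine ⟨D p x₀ 1, D p x₁ 1, D_pos hp x₀ one_ne_zero, D_pos hp x₁ one_ne_zero, ?_⟩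
  intro x y hxy
  rcases eq_or_ne y 0 with rfl | hy
  · have hx : x = 0 := by
      have : |x| ≤ 0 := by simpa using hxy
      exact abs_eq_zero.1 (le_antisymm this (abs_nonneg x))
    subst hx
    have hD0 : D p 0 0 = 0 := by simp [D]
    simp [hD0, Real.zero_rpow (by positivity : p ≠ 0)]
  · have hy' : 0 < |y| := abs_pos.2 hy
    have key : D p x y = |y| ^ p * D p (x / y) 1 := by
      rcases hy.lt_or_gt with h | h
      · have e1 : (-y) * (x / y) = -x := by
          field_simp
        calc D p x y = D p (-x) (-y) := (D_symm p x y).symm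
          _ = D p ((-y) * (x / y)) ((-y) * 1) := by rw [e1, mul_one]
          _ = (-y) ^ p * D p (x / y) 1 := D_scale hp (by linarith) _ _
          _ = |y| ^ p * D p (x / y) 1 := by rw [abs_of_neg h]
      · have e1 : y * (x / y) = x := by field_simp
        calc D p x y = D p (y * (x / y)) (y * 1) := by rw [e1, mul_one]
          _ = y ^ p * D p (x / y) 1 := D_scale hp h _ _
          _ = |y| ^ p * D p (x / y) 1 := by rw [abs_of_pos h]
    have hmem : x / y ∈ Icc (-2:ℝ) 2 := by
      have h2 : |x / y| ≤ 2 := by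
        rw [abs_div, div_le_iff₀ hy']
        linarith
      exact abs_le.1 h2
    have hyp : 0 < |y| ^ p := Real.rpow_pos_of_pos hy' p
    have hmin : D p x₀ 1 ≤ D p (x / y) 1 := hx₀ hmem
    have hmax : D p (x / y) 1 ≤ D p x₁ 1 := hx₁ hmem
    constructor
    · rw [key]
      nlinarith [hmin, hyp]
    · rw [key]
      nlinarith [hmax, hyp]

lemma scalar {p : ℝ} (hp : 1 < p) : ∃ c C : ℝ, 0 < c ∧ 0 < C ∧ ∀ x y : ℝ,
    c * (y ^ 2 * (|y| + |x|) ^ (p - 2)) ≤ D p x y ∧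
    D p x y ≤ C * (y ^ 2 * (|y| + |x|) ^ (p - 2)) := by
  obtain ⟨cB, CB, hcB, hCB, hB⟩ := lemB hp
  set q := p - 2 with hq
  set m := min ((3:ℝ) ^ (-q)) 1 with hm
  set M := max ((3:ℝ) ^ (-q)) 1 with hM
  have hm0 : 0 < m := lt_min (Real.rpow_pos_of_pos (by norm_num) _) one_pos
  have hM0 : (0:ℝ) < M := lt_of_lt_of_le one_pos (le_max_right _ _)
  have hpp : 0 < p * (p - 1) / 2 := by nlinarith
  refine ⟨min (cB * m) (p * (p - 1) / 2 * m), max (CB * M) (p * (p - 1) / 2 * M),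
    lt_min (mul_pos hcB hm0) (mul_pos hpp hm0),
    lt_of_lt_of_le (mul_pos hCB hM0) (le_max_left _ _), ?_⟩
  intro x y
  rcases eq_or_ne y 0 with rfl | hy
  · constructor <;> simp [D]
  have hy' : 0 < |y| := abs_pos.2 hy
  set S := |y| + |x| with hS
  have hS0 : 0 < S := by have := abs_nonneg x; linarith
  have hy2 : (0:ℝ) ≤ y ^ 2 := sq_nonneg y
  have hSq : (0:ℝ) < S ^ q := Real.rpow_pos_of_pos hS0 q
  rcases le_or_gt (|x|) (2 * |y|) with hcase | hcase
  · obtain ⟨hlow, hupp⟩ := hB x y hcase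
    have hpin := rpow_pin (q := q) hS0 (show S / 3 ≤ |y| by rw [hS]; linarith)
      (show |y| ≤ S by rw [hS]; linarith [abs_nonneg x])
    have hyp : |y| ^ p = y ^ 2 * |y| ^ q := by
      rw [show p = 2 + q by rw [hq]; ring, Real.rpow_add hy' 2 q,
        show (2:ℝ) = ((2:ℕ):ℝ) by norm_num, Real.rpow_natCast, sq_abs]
    rw [hyp] at hlow hupp
    constructor
    · have hA := mul_le_mul_of_nonneg_right
        (min_le_left (cB * m) (p * (p - 1) / 2 * m)) (mul_nonneg hy2 hSq.le)
      have hBB := mul_le_mul_of_nonneg_left hpin.1 (mul_nonneg hcB.le hy2)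
      nlinarith [hA, hBB, hlow]
    · have hA := mul_le_mul_of_nonneg_right
        (le_max_left (CB * M) (p * (p - 1) / 2 * M)) (mul_nonneg hy2 hSq.le)
      have hBB := mul_le_mul_of_nonneg_left hpin.2 (mul_nonneg hCB.le hy2)
      nlinarith [hA, hBB, hupp]
  · obtain ⟨ζ, hζ1, hζ2, hrepr⟩ := D_repr hp hcase.le
    have hx0 : 0 < |x| := by linarith
    have hpin := rpow_pin (q := q) hS0 (show S / 3 ≤ |ζ| by rw [hS]; linarith)
      (show |ζ| ≤ S by rw [hS]; linarith)
    rw [hrepr]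
    constructor
    · have hA := mul_le_mul_of_nonneg_right
        (min_le_right (cB * m) (p * (p - 1) / 2 * m)) (mul_nonneg hy2 hSq.le)
      have hBB := mul_le_mul_of_nonneg_left hpin.1 (mul_nonneg hpp.le hy2)
      nlinarith [hA, hBB]
    · have hA := mul_le_mul_of_nonneg_right
        (le_max_right (CB * M) (p * (p - 1) / 2 * M)) (mul_nonneg hy2 hSq.le)
      have hBB := mul_le_mul_of_nonneg_left hpin.2 (mul_nonneg hpp.le hy2)
      nlinarith [hA, hBB]

lemma index_D {p a : ℝ} (hp : 1 < p) (ha : 0 < a) (u v : ℝ) :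
    a * |u + v| ^ p - a * |u| ^ p - p * (a * |u| ^ (p - 2) * u * v) =
      D p (a ^ ((1:ℝ)/p) * u) (a ^ ((1:ℝ)/p) * v) := by
  have hp0 : p ≠ 0 := by positivity
  have hb : (0:ℝ) < a ^ ((1:ℝ)/p) := Real.rpow_pos_of_pos ha _
  have hbp : (a ^ ((1:ℝ)/p)) ^ p = a := by
    rw [← Real.rpow_mul ha.le, one_div_mul_cancel hp0, Real.rpow_one]
  rw [D_scale hp hb, hbp]
  simp only [D]
  ring

lemma index_h {p a : ℝ} (hp : 1 < p) (ha : 0 < a) (u v : ℝ) :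
    a ^ ((2:ℝ)/p) * |v| ^ 2 * (a ^ ((1:ℝ)/p) * |v| + a ^ ((1:ℝ)/p) * |u|) ^ (p - 2) =
      (a ^ ((1:ℝ)/p) * v) ^ 2 *
        (|a ^ ((1:ℝ)/p) * v| + |a ^ ((1:ℝ)/p) * u|) ^ (p - 2) := by
  have hb : (0:ℝ) < a ^ ((1:ℝ)/p) := Real.rpow_pos_of_pos ha _
  have habs : ∀ w : ℝ, |a ^ ((1:ℝ)/p) * w| = a ^ ((1:ℝ)/p) * |w| := fun w => by
    rw [abs_mul, abs_of_pos hb]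
  have hb2 : (a ^ ((1:ℝ)/p)) ^ (2:ℕ) = a ^ ((2:ℝ)/p) := by
    rw [← Real.rpow_natCast (a ^ ((1:ℝ)/p)) 2, ← Real.rpow_mul ha.le]
    norm_num
    rw [div_eq_mul_inv, mul_comm]
  rw [habs, habs, mul_pow, hb2, ← sq_abs v]


end BregAux

open Real Set



/-- Two-sided estimate for the Bregman distance of the weighted pseudo `p`-norm
`ξ ↦ Σᵢ aᵢ|ξᵢ|^p`, with constants depending only on `p`. -/
theorem bregman_pseudo_p_two_sided (p : ℝ) (hp : 1 < p) :
    ∃ c C : ℝ, 0 < c ∧ 0 < C ∧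
      ∀ (n : ℕ) (a : Fin n → ℝ), (∀ i, 0 < a i) →
        ∀ ξ η : Fin n → ℝ,
          c * (∑ i, (a i) ^ ((2 : ℝ) / p) * |η i| ^ 2 *
              ((a i) ^ ((1 : ℝ) / p) * |η i| + (a i) ^ ((1 : ℝ) / p) * |ξ i|) ^ (p - 2)) ≤
              (∑ i, a i * |ξ i + η i| ^ p) - (∑ i, a i * |ξ i| ^ p) -
                p * ∑ i, a i * |ξ i| ^ (p - 2) * ξ i * η i ∧
            (∑ i, a i * |ξ i + η i| ^ p) - (∑ i, a i * |ξ i| ^ p) -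
                p * ∑ i, a i * |ξ i| ^ (p - 2) * ξ i * η i ≤
              C * (∑ i, (a i) ^ ((2 : ℝ) / p) * |η i| ^ 2 *
                ((a i) ^ ((1 : ℝ) / p) * |η i| + (a i) ^ ((1 : ℝ) / p) * |ξ i|) ^ (p - 2)) := by
  obtain ⟨c, C, hc, hC, hsc⟩ := BregAux.scalar hp
  refine ⟨c, C, hc, hC, ?_⟩
  intro n a ha ξ η
  have hmid : (∑ i, a i * |ξ i + η i| ^ p) - (∑ i, a i * |ξ i| ^ p) -
      p * ∑ i, a i * |ξ i| ^ (p - 2) * ξ i * η i =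
      ∑ i, BregAux.D p ((a i) ^ ((1:ℝ)/p) * ξ i) ((a i) ^ ((1:ℝ)/p) * η i) := by
    rw [Finset.mul_sum, ← Finset.sum_sub_distrib, ← Finset.sum_sub_distrib]
    exact Finset.sum_congr rfl fun i _ => BregAux.index_D hp (ha i) (ξ i) (η i)
  have hrhs : (∑ i, (a i) ^ ((2 : ℝ) / p) * |η i| ^ 2 *
      ((a i) ^ ((1 : ℝ) / p) * |η i| + (a i) ^ ((1 : ℝ) / p) * |ξ i|) ^ (p - 2)) =
      ∑ i, ((a i) ^ ((1:ℝ)/p) * η i) ^ 2 *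
        (|(a i) ^ ((1:ℝ)/p) * η i| + |(a i) ^ ((1:ℝ)/p) * ξ i|) ^ (p - 2) :=
    Finset.sum_congr rfl fun i _ => BregAux.index_h hp (ha i) (ξ i) (η i)
  rw [hmid, hrhs]
  constructor
  · rw [Finset.mul_sum]
    exact Finset.sum_le_sum fun i _ => (hsc _ _).1
  · rw [Finset.mul_sum]
    exact Finset.sum_le_sum fun i _ => (hsc _ _).2
end

section
/- Let 1 < s < p < ∞ and fix positive weights a₁,…,aₙ. Define |ξ|_{s,a} := (Σᵢ aᵢ|ξᵢ|^s)^{1/s}. There exists a constant c(p,s) > 0 such that for all ξ, η ∈ ℝⁿ, |ξ+η|_{s,a}^p − |ξ|_{s,a}^p − p·|ξ|_{s,a}^{p-s}·Σᵢ aᵢ|ξᵢ|^{s-2}ξᵢηᵢ ≥ c(p,s)·|ξ|_{s,a}^{p-s}·Σᵢ |ηᵢ'|²(|ηᵢ'| + |ξᵢ'|)^{s-2}, where ξᵢ' := aᵢ^{1/s}ξᵢ and ηᵢ' := aᵢ^{1/s}ηᵢ. -/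
open Real Set

section BregmanAux

variable {s : ℝ}


lemma sigm_of_nonneg (hs : 1 < s) {x : ℝ} (hx : 0 ≤ x) : |x| ^ (s-2) * x = x ^ (s-1) := by
  rcases eq_or_lt_of_le hx with h | h
  · rw [← h, mul_zero, Real.zero_rpow (by linarith)]
  · rw [abs_of_pos h, show s - 1 = s - 2 + 1 by ring, Real.rpow_add_one h.ne']

lemma sigm_neg (x : ℝ) : |(-x)| ^ (s-2) * (-x) = -(|x| ^ (s-2) * x) := by
  rw [abs_neg]; ring

lemma sigm_strictMono (hs : 1 < s) : StrictMono (fun x : ℝ => |x| ^ (s-2) * x) := by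
  have key : ∀ a b : ℝ, 0 ≤ a → a < b → |a| ^ (s-2) * a < |b| ^ (s-2) * b := by
    intro a b ha hab
    rw [sigm_of_nonneg hs ha, sigm_of_nonneg hs (ha.trans hab.le)]
    exact Real.rpow_lt_rpow ha hab (by linarith)
  intro a b hab
  show |a| ^ (s-2) * a < |b| ^ (s-2) * b
  rcases le_or_gt 0 a with ha | ha
  · exact key a b ha hab
  rcases le_or_gt 0 b with hb | hb
  · have h1 : |a| ^ (s-2) * a < 0 := by
      have : (0:ℝ) < |a| ^ (s-2) := Real.rpow_pos_of_pos (abs_pos.mpr ha.ne) _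
      nlinarith
    have h2 : 0 ≤ |b| ^ (s-2) * b := by positivity
    linarith
  · have := key (-b) (-a) (by linarith) (by linarith)
    rw [sigm_neg, sigm_neg] at this; linarith

lemma continuous_sigm (hs : 1 < s) : Continuous (fun x : ℝ => |x| ^ (s-2) * x) := by
  have h1 : Continuous (deriv (fun x : ℝ => ‖x‖ ^ s)) :=
    (contDiff_norm_rpow (E := ℝ) hs).continuous_deriv le_rfl
  have h2 : (deriv (fun x : ℝ => ‖x‖ ^ s)) = fun x : ℝ => s * |x| ^ (s-2) * x := by
    funext x
    have := (hasDerivAt_abs_rpow x hs).deriv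
    simp only [Real.norm_eq_abs]
    rw [this]
  rw [h2] at h1
  have h3 : (fun x : ℝ => |x| ^ (s-2) * x) = fun x : ℝ => s⁻¹ * (s * |x| ^ (s-2) * x) := by
    funext x; field_simp
  rw [h3]; exact continuous_const.mul h1

lemma continuous_abs_rpow (hs : 1 < s) : Continuous (fun x : ℝ => |x| ^ s) :=
  continuous_abs.rpow_const (fun x => Or.inr (by linarith))

/-- strict tangent-line inequality for `|x|^s` -/
lemma tangent_lt (hs : 1 < s) (x y : ℝ) (hy : y ≠ 0) :
    s * (|x| ^ (s-2) * x) * y < |x+y| ^ s - |x| ^ s := by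
  have hderiv : ∀ v : ℝ, HasDerivAt (fun v : ℝ => |v| ^ s) (s * |v| ^ (s-2) * v) v :=
    fun v => hasDerivAt_abs_rpow v hs
  have hs0 : (0:ℝ) < s := by linarith
  rcases hy.lt_or_gt with h | h
  · -- y < 0
    obtain ⟨c, hc, hceq⟩ := exists_hasDerivAt_eq_slope (fun v : ℝ => |v| ^ s)
      (fun v => s * |v| ^ (s-2) * v) (show x + y < x by linarith)
      ((continuous_abs_rpow hs).continuousOn) (fun v _ => hderiv v)
    have hcx : |c| ^ (s-2) * c < |x| ^ (s-2) * x := sigm_strictMono hs hc.2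
    rw [eq_div_iff (show x - (x+y) ≠ 0 by intro hh; apply hy; linarith)] at hceq
    nlinarith [mul_pos (mul_pos hs0 (sub_pos.mpr hcx)) (neg_pos.mpr h)]
  · -- 0 < y
    obtain ⟨c, hc, hceq⟩ := exists_hasDerivAt_eq_slope (fun v : ℝ => |v| ^ s)
      (fun v => s * |v| ^ (s-2) * v) (show x < x + y by linarith)
      ((continuous_abs_rpow hs).continuousOn) (fun v _ => hderiv v)
    have hcx : |x| ^ (s-2) * x < |c| ^ (s-2) * c := sigm_strictMono hs hc.1
    rw [eq_div_iff (show x + y - x ≠ 0 by intro hh; apply hy; linarith)] at hceq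
    nlinarith [mul_pos (mul_pos hs0 (sub_pos.mpr hcx)) h]


/-- minimum of the Bregman remainder on the compact region -/
lemma exists_min (hs : 1 < s) : ∃ m : ℝ, 0 < m ∧ ∀ x y : ℝ, |x| + |y| = 1 → 1/3 ≤ |y| →
    m ≤ |x+y| ^ s - |x| ^ s - s * (|x| ^ (s-2) * x) * y := by
  set F : ℝ × ℝ → ℝ := fun q => |q.1 + q.2| ^ s - |q.1| ^ s - s * (|q.1| ^ (s-2) * q.1) * q.2
    with hF
  have hFc : Continuous F := by
    apply Continuous.sub
    · apply Continuous.sub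
      · exact (continuous_abs_rpow hs).comp (continuous_fst.add continuous_snd)
      · exact (continuous_abs_rpow hs).comp continuous_fst
    · exact (continuous_const.mul ((continuous_sigm hs).comp continuous_fst)).mul continuous_snd
  set T : Set (ℝ × ℝ) := {q | |q.1| + |q.2| = 1 ∧ 1/3 ≤ |q.2|} with hT
  have hTc : IsCompact T := by
    apply Metric.isCompact_of_isClosed_isBounded
    · apply IsClosed.inter
      · exact isClosed_eq (continuous_fst.abs.add continuous_snd.abs) continuous_const
      · exact isClosed_le continuous_const continuous_snd.abs
    · apply Bornology.IsBounded.subset (Metric.isBounded_closedBall (x := (0:ℝ×ℝ)) (r := 2))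
      rintro ⟨x, y⟩ ⟨h1, _⟩
      dsimp only at h1 ⊢
      simp only [Metric.mem_closedBall, Prod.dist_eq, dist_zero_right]
      have hx : |x| ≤ 1 := by have := abs_nonneg y; linarith
      have hy : |y| ≤ 1 := by have := abs_nonneg x; linarith
      refine max_le ?_ ?_ <;> · dsimp only; rw [Real.norm_eq_abs]; linarith
  have hTne : T.Nonempty := ⟨(0, 1), by simp only [hT, mem_setOf_eq]; norm_num⟩
  obtain ⟨q₀, hq₀T, hmin⟩ := hTc.exists_isMinOn hTne hFc.continuousOn
  refine ⟨F q₀, ?_, ?_⟩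
  · have hy0 : q₀.2 ≠ 0 := by
      intro h
      have h2 := hq₀T.2
      rw [h] at h2; simp at h2; linarith
    have := tangent_lt hs q₀.1 q₀.2 hy0
    simp only [hF]; linarith
  · intro x y h1 h2
    exact hmin (show (x, y) ∈ T from ⟨h1, h2⟩)

/-- strong convexity estimate for `u ↦ u^s` near a positive point -/
lemma strong (hs : 1 < s) {x y : ℝ} (hx : 0 < x) (hy : |y| ≤ x / 2) :
    s * (s-1) * min ((1/2:ℝ) ^ (s-2)) ((3/2:ℝ) ^ (s-2)) / 2 * (y^2 * x ^ (s-2)) ≤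
      (x+y) ^ s - x ^ s - s * x ^ (s-1) * y := by
  set K : ℝ := s * (s-1) * min ((1/2:ℝ) ^ (s-2)) ((3/2:ℝ) ^ (s-2)) with hK
  set M : ℝ := K * x ^ (s-2) with hM
  have hxs : (0:ℝ) < x ^ (s-2) := Real.rpow_pos_of_pos hx _
  have hKpos : 0 < K := by
    apply mul_pos (by nlinarith)
    exact lt_min (Real.rpow_pos_of_pos (by norm_num) _) (Real.rpow_pos_of_pos (by norm_num) _)
  set g : ℝ → ℝ := fun u => u ^ s - M/2 * u^2 with hg
  set g' : ℝ → ℝ := fun u => s * u ^ (s-1) - M * u with hg'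
  have hgderiv : ∀ u : ℝ, 0 < u → HasDerivAt g (g' u) u := by
    intro u hu
    have h1 : HasDerivAt (fun u : ℝ => u ^ s) (s * u ^ (s-1)) u :=
      Real.hasDerivAt_rpow_const (x := u) (p := s) (Or.inl hu.ne')
    have h2 : HasDerivAt (fun u : ℝ => M/2 * u^2) (M * u) u := by
      have h3 := (hasDerivAt_pow 2 u).const_mul (M/2)
      norm_num at h3
      rw [show M * u = M / 2 * (2 * u) by ring]
      exact h3
    exact h1.sub h2
  have hg'deriv : ∀ u : ℝ, 0 < u → HasDerivAt g' (s * ((s-1) * u ^ (s-2)) - M) u := by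
    intro u hu
    have h1 : HasDerivAt (fun u : ℝ => u ^ (s-1)) ((s-1) * u ^ (s-1-1)) u :=
      Real.hasDerivAt_rpow_const (x := u) (p := s-1) (Or.inl hu.ne')
    have h2 : HasDerivAt (fun u : ℝ => M * u) M u := by
      simpa using (hasDerivAt_id u).const_mul M
    rw [show s - 1 - 1 = s - 2 by ring] at h1
    exact (h1.const_mul s).sub h2
  -- g' is monotone on Icc (x/2) (3x/2)
  have hg'mono : MonotoneOn g' (Icc (x/2) (3*x/2)) := by
    apply monotoneOn_of_deriv_nonneg (convex_Icc _ _)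
    · intro u hu
      apply ContinuousWithinAt.sub
      · exact (continuousAt_const.mul
          (Real.continuousAt_rpow_const u (s-1) (Or.inr (by linarith)))).continuousWithinAt
      · exact (continuousAt_const.mul continuousAt_id).continuousWithinAt
    · intro u hu
      rw [interior_Icc] at hu
      have hu0 : 0 < u := lt_trans (by linarith) hu.1
      exact (hg'deriv u hu0).differentiableAt.differentiableWithinAt
    · intro u hu
      rw [interior_Icc] at hu
      have hu0 : 0 < u := lt_trans (by linarith) hu.1
      rw [(hg'deriv u hu0).deriv]
      -- need : M ≤ s * ((s-1) * u ^ (s-2))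
      have hmin : min ((1/2:ℝ) ^ (s-2)) ((3/2:ℝ) ^ (s-2)) * x ^ (s-2) ≤ u ^ (s-2) := by
        rcases le_total s 2 with h2 | h2
        · calc min ((1/2:ℝ) ^ (s-2)) ((3/2:ℝ) ^ (s-2)) * x ^ (s-2)
              ≤ (3/2:ℝ) ^ (s-2) * x ^ (s-2) := by
                exact mul_le_mul_of_nonneg_right (min_le_right _ _) hxs.le
            _ = (3*x/2) ^ (s-2) := by
                rw [show (3*x/2) = (3/2)*x by ring, Real.mul_rpow (by norm_num) hx.le]
            _ ≤ u ^ (s-2) := Real.rpow_le_rpow_of_nonpos hu0 hu.2.le (by linarith)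
        · calc min ((1/2:ℝ) ^ (s-2)) ((3/2:ℝ) ^ (s-2)) * x ^ (s-2)
              ≤ (1/2:ℝ) ^ (s-2) * x ^ (s-2) := by
                exact mul_le_mul_of_nonneg_right (min_le_left _ _) hxs.le
            _ = (x/2) ^ (s-2) := by
                rw [show (x/2) = (1/2)*x by ring, Real.mul_rpow (by norm_num) hx.le]
            _ ≤ u ^ (s-2) := Real.rpow_le_rpow (by linarith) hu.1.le (by linarith)
      have hs1 : (0:ℝ) < s * (s-1) := by nlinarith
      rw [hM, hK]
      nlinarith [hmin, hs1]
  -- tangent line inequality for g at x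
  have htang : g x + g' x * y ≤ g (x+y) := by
    rcases eq_or_ne y 0 with rfl | hy0
    · simp
    have hmem : ∀ u, u ∈ Icc (x/2) (3*x/2) → True := fun _ _ => trivial
    have hcont : ContinuousOn g (Icc (x/2) (3*x/2)) := by
      apply ContinuousOn.sub
      · exact fun u hu => ((Real.continuousAt_rpow_const u s (Or.inr (by linarith)))).continuousWithinAt
      · exact (continuous_const.mul (continuous_pow 2)).continuousOn
    have habs := abs_le.mp hy
    rcases hy0.lt_or_gt with hneg | hpos
    · obtain ⟨c, hc, hceq⟩ := exists_hasDerivAt_eq_slope g g' (show x + y < x by linarith)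
        (hcont.mono (by intro u hu; exact ⟨by simp at hu ⊢; linarith [hu.1], by simp at hu ⊢; linarith [hu.2]⟩))
        (fun u hu => hgderiv u (by simp at hu; linarith [hu.1]))
      rw [eq_div_iff (show x - (x+y) ≠ 0 by intro hh; apply hy0; linarith)] at hceq
      have hcle : g' c ≤ g' x := hg'mono
        (⟨by simp at hc; linarith [hc.1], by simp at hc; linarith [hc.1, hc.2]⟩)
        (⟨by linarith, by linarith⟩) (le_of_lt hc.2)
      nlinarith [mul_le_mul_of_nonneg_right hcle (show (0:ℝ) ≤ -y by linarith)]
    · obtain ⟨c, hc, hceq⟩ := exists_hasDerivAt_eq_slope g g' (show x < x + y by linarith)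
        (hcont.mono (by intro u hu; exact ⟨by simp at hu ⊢; linarith [hu.1], by simp at hu ⊢; linarith [hu.2]⟩))
        (fun u hu => hgderiv u (by simp at hu; linarith [hu.1]))
      rw [eq_div_iff (show x + y - x ≠ 0 by intro hh; apply hy0; linarith)] at hceq
      have hcle : g' x ≤ g' c := hg'mono (⟨by linarith, by linarith⟩)
        (⟨by simp at hc; linarith [hc.1], by simp at hc; linarith [hc.2]⟩) (le_of_lt hc.1)
      nlinarith [mul_le_mul_of_nonneg_right hcle (show (0:ℝ) ≤ y by linarith)]
  -- expand
  have hexp : g (x+y) = (x+y)^s - M/2*(x+y)^2 := rfl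
  have hexp2 : g x + g' x * y = x^s - M/2*x^2 + (s*x^(s-1) - M*x)*y := rfl
  rw [hexp, hexp2] at htang
  have : M/2 * y^2 ≤ (x+y)^s - x^s - s*x^(s-1)*y := by nlinarith [htang]
  calc K / 2 * (y^2 * x^(s-2)) = M/2 * y^2 := by rw [hM]; ring
    _ ≤ _ := this


lemma sigm_of_nonneg' (hs : 1 < s) {x : ℝ} (hx : 0 ≤ x) : |x| ^ (s-2) * x = x ^ (s-1) := by
  rcases eq_or_lt_of_le hx with h | h
  · rw [← h, mul_zero, Real.zero_rpow (by linarith)]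
  · rw [abs_of_pos h, show s - 1 = s - 2 + 1 by ring, Real.rpow_add_one h.ne']

lemma sigm_neg' (x : ℝ) : |(-x)| ^ (s-2) * (-x) = -(|x| ^ (s-2) * x) := by
  rw [abs_neg]; ring

/-- the small-`y` case, positive `x` -/
lemma small_pos (hs : 1 < s) {x y : ℝ} (hx : 0 < x) (hy : |y| ≤ x / 2) :
    s * (s-1) * min ((1/2:ℝ) ^ (s-2)) ((3/2:ℝ) ^ (s-2)) / 2 * min 1 ((2/3:ℝ) ^ (s-2)) *
      (y^2 * (|y| + |x|) ^ (s-2)) ≤ |x+y| ^ s - |x| ^ s - s * (|x| ^ (s-2) * x) * y := by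
  have habs := abs_le.mp hy
  have hxy : 0 < x + y := by linarith
  have h1 : |x + y| = x + y := abs_of_pos hxy
  have h2 : |x| = x := abs_of_pos hx
  have key := strong hs hx hy
  rw [h1, h2, show x ^ (s-2) * x = x ^ (s-1) by
    rw [← Real.rpow_add_one hx.ne', show s-2+1 = s-1 by ring]]
  set K : ℝ := s * (s-1) * min ((1/2:ℝ) ^ (s-2)) ((3/2:ℝ) ^ (s-2)) / 2 with hK
  have hKpos : 0 < K := by
    have ha := Real.rpow_pos_of_pos (show (0:ℝ) < 1/2 by norm_num) (s-2)
    have hb := Real.rpow_pos_of_pos (show (0:ℝ) < 3/2 by norm_num) (s-2)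
    have hc : (0:ℝ) < min ((1/2:ℝ) ^ (s-2)) ((3/2:ℝ) ^ (s-2)) := lt_min ha hb
    have hs1 : (0:ℝ) < s * (s-1) := by nlinarith
    rw [hK]; positivity
  refine le_trans ?_ key
  rw [mul_assoc K]
  apply mul_le_mul_of_nonneg_left _ hKpos.le
  have hsq : (0:ℝ) ≤ y^2 := sq_nonneg y
  have hxx : x ≤ |y| + x := le_add_of_nonneg_left (abs_nonneg y)
  rcases le_total s 2 with h2s | h2s
  · have hbase : (|y| + x) ^ (s-2) ≤ x ^ (s-2) :=
      Real.rpow_le_rpow_of_nonpos hx hxx (by linarith)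
    calc min 1 ((2/3:ℝ) ^ (s-2)) * (y^2 * (|y| + x) ^ (s-2))
        ≤ 1 * (y^2 * x ^ (s-2)) := by
          apply mul_le_mul (min_le_left _ _)
            (mul_le_mul_of_nonneg_left hbase hsq)
            (by positivity)
            (by norm_num)
      _ = y^2 * x ^ (s-2) := one_mul _
  · have hup : |y| + x ≤ 3/2 * x := by linarith
    have hbase : (|y| + x) ^ (s-2) ≤ (3/2:ℝ) ^ (s-2) * x ^ (s-2) := by
      rw [← Real.mul_rpow (by norm_num) hx.le]
      exact Real.rpow_le_rpow (by positivity) hup (by linarith)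
    have hmul : (2/3:ℝ) ^ (s-2) * (3/2:ℝ) ^ (s-2) = 1 := by
      rw [← Real.mul_rpow (by norm_num) (by norm_num)]
      norm_num
    calc min 1 ((2/3:ℝ) ^ (s-2)) * (y^2 * (|y| + x) ^ (s-2))
        ≤ (2/3:ℝ) ^ (s-2) * (y^2 * ((3/2:ℝ) ^ (s-2) * x ^ (s-2))) := by
          apply mul_le_mul (min_le_right _ _)
            (mul_le_mul_of_nonneg_left hbase hsq) (by positivity) (by positivity)
      _ = (2/3:ℝ) ^ (s-2) * (3/2:ℝ) ^ (s-2) * (y^2 * x ^ (s-2)) := by ring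
      _ = y^2 * x ^ (s-2) := by rw [hmul, one_mul]

/-- The scalar Bregman inequality. -/
lemma scalar (hs : 1 < s) : ∃ c : ℝ, 0 < c ∧ ∀ x y : ℝ,
    c * (y^2 * (|y| + |x|) ^ (s-2)) ≤ |x+y| ^ s - |x| ^ s - s * (|x| ^ (s-2) * x) * y := by
  obtain ⟨m, hm, hmin⟩ := exists_min hs
  set cA : ℝ := s * (s-1) * min ((1/2:ℝ) ^ (s-2)) ((3/2:ℝ) ^ (s-2)) / 2 * min 1 ((2/3:ℝ) ^ (s-2))
    with hcA
  have hcApos : 0 < cA := by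
    have ha := Real.rpow_pos_of_pos (show (0:ℝ) < 1/2 by norm_num) (s-2)
    have hb := Real.rpow_pos_of_pos (show (0:ℝ) < 3/2 by norm_num) (s-2)
    have hd := Real.rpow_pos_of_pos (show (0:ℝ) < 2/3 by norm_num) (s-2)
    have hc : (0:ℝ) < min ((1/2:ℝ) ^ (s-2)) ((3/2:ℝ) ^ (s-2)) := lt_min ha hb
    have he : (0:ℝ) < min 1 ((2/3:ℝ) ^ (s-2)) := lt_min one_pos hd
    have hs1 : (0:ℝ) < s * (s-1) := by nlinarith
    rw [hcA]; positivity
  refine ⟨min cA m, lt_min hcApos hm, ?_⟩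
  intro x y
  rcases eq_or_ne y 0 with rfl | hy0
  · simp
  rcases le_or_gt (|y|) (|x|/2) with hsmall | hbig
  · -- small case
    have hx0 : x ≠ 0 := by
      intro h; rw [h] at hsmall; simp at hsmall; exact hy0 hsmall
    have step : cA * (y^2 * (|y| + |x|) ^ (s-2)) ≤ |x+y| ^ s - |x| ^ s - s * (|x| ^ (s-2) * x) * y := by
      rcases hx0.lt_or_gt with hneg | hpos
      · have hx' : 0 < -x := by linarith
        have hy' : |(-y)| ≤ (-x) / 2 := by rw [abs_neg]; rw [abs_of_neg hneg] at hsmall; linarith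
        have this1 := small_pos hs hx' hy'
        rw [show (-x) + (-y) = -(x+y) by ring, abs_neg, abs_neg, abs_neg] at this1
        rw [show ((-y):ℝ)^2 = y^2 by ring] at this1
        rw [show s * (|x| ^ (s-2) * -x) * -y = s * (|x| ^ (s-2) * x) * y by ring] at this1
        exact this1
      · rw [abs_of_pos hpos] at hsmall
        exact small_pos hs hpos hsmall
    refine le_trans ?_ step
    apply mul_le_mul_of_nonneg_right (min_le_left _ _) (by positivity)
  · -- big case
    set l : ℝ := |x| + |y| with hl
    have hlpos : 0 < l := by
      have := abs_pos.mpr hy0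
      have := abs_nonneg x
      rw [hl]; linarith
    have hx' : |x / l| + |y / l| = 1 := by
      rw [abs_div, abs_div, abs_of_pos hlpos, ← add_div, hl, div_self hlpos.ne']
    have hy' : 1/3 ≤ |y / l| := by
      rw [abs_div, abs_of_pos hlpos, le_div_iff₀ hlpos]
      rw [hl]; linarith [abs_nonneg x, abs_nonneg y, hbig]
    have hkey := hmin (x/l) (y/l) hx' hy'
    -- multiply by l^s
    have hls : (0:ℝ) < l ^ s := Real.rpow_pos_of_pos hlpos _
    have hident : l ^ s * (|x/l + y/l| ^ s - |x/l| ^ s - s * (|x/l| ^ (s-2) * (x/l)) * (y/l))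
        = |x+y| ^ s - |x| ^ s - s * (|x| ^ (s-2) * x) * y := by
      have e1 : |x/l + y/l| ^ s = |x+y| ^ s / l ^ s := by
        rw [← add_div, abs_div, abs_of_pos hlpos, Real.div_rpow (abs_nonneg _) hlpos.le]
      have e2 : |x/l| ^ s = |x| ^ s / l ^ s := by
        rw [abs_div, abs_of_pos hlpos, Real.div_rpow (abs_nonneg _) hlpos.le]
      have e3 : |x/l| ^ (s-2) = |x| ^ (s-2) / l ^ (s-2) := by
        rw [abs_div, abs_of_pos hlpos, Real.div_rpow (abs_nonneg _) hlpos.le]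
      have e4 : l ^ s = l ^ (s-2) * l^2 := by
        rw [← Real.rpow_natCast l 2, ← Real.rpow_add hlpos]
        norm_num
      have hls2 : (0:ℝ) < l ^ (s-2) := Real.rpow_pos_of_pos hlpos _
      rw [e1, e2, e3]
      field_simp
      rw [e4]
      ring
    have hfin : l ^ s * m ≤ |x+y| ^ s - |x| ^ s - s * (|x| ^ (s-2) * x) * y := by
      rw [← hident]
      exact mul_le_mul_of_nonneg_left hkey hls.le
    refine le_trans ?_ hfin
    rw [add_comm (|y|) (|x|), ← hl]
    have e4 : l ^ s = l ^ (s-2) * l^2 := by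
      rw [← Real.rpow_natCast l 2, ← Real.rpow_add hlpos]
      norm_num
    have hy2 : y^2 ≤ l^2 := by
      have h1 : |y| ≤ l := by rw [hl]; linarith [abs_nonneg x]
      nlinarith [abs_nonneg y, sq_abs y]
    have hls2 : (0:ℝ) < l ^ (s-2) := Real.rpow_pos_of_pos hlpos _
    calc min cA m * (y^2 * l ^ (s-2)) ≤ m * (l^2 * l ^ (s-2)) := by
          apply mul_le_mul (min_le_right _ _)
            (mul_le_mul_of_nonneg_right hy2 hls2.le) (by positivity) hm.le
      _ = l ^ s * m := by rw [e4]; ring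


/-- convexity tangent line inequality for `t ↦ t^r`, `r > 1`, on nonneg reals -/
lemma rpow_tangent {A B r : ℝ} (hA : 0 ≤ A) (hB : 0 ≤ B) (hr : 1 < r) :
    r * A ^ (r-1) * (B - A) ≤ B ^ r - A ^ r := by
  have hderiv : ∀ u : ℝ, HasDerivAt (fun t : ℝ => t ^ r) (r * u ^ (r-1)) u :=
    fun u => Real.hasDerivAt_rpow_const (Or.inr hr.le)
  have hcont : ∀ C D : ℝ, ContinuousOn (fun t : ℝ => t ^ r) (Icc C D) :=
    fun C D u _ => (Real.continuousAt_rpow_const u r (Or.inr (by linarith))).continuousWithinAt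
  rcases lt_trichotomy A B with h | h | h
  · obtain ⟨c, hc, hceq⟩ := exists_hasDerivAt_eq_slope (fun t : ℝ => t ^ r)
      (fun u => r * u ^ (r-1)) h (hcont _ _) (fun u _ => hderiv u)
    rw [eq_div_iff (by intro hh; linarith : B - A ≠ 0)] at hceq
    have hle : A ^ (r-1) ≤ c ^ (r-1) := Real.rpow_le_rpow hA hc.1.le (by linarith)
    nlinarith [mul_le_mul_of_nonneg_right (mul_le_mul_of_nonneg_left hle (by linarith : (0:ℝ) ≤ r))
      (by linarith : (0:ℝ) ≤ B - A)]
  · subst h; simp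
  · obtain ⟨c, hc, hceq⟩ := exists_hasDerivAt_eq_slope (fun t : ℝ => t ^ r)
      (fun u => r * u ^ (r-1)) h (hcont _ _) (fun u _ => hderiv u)
    rw [eq_div_iff (by intro hh; linarith : A - B ≠ 0)] at hceq
    have hle : c ^ (r-1) ≤ A ^ (r-1) :=
      Real.rpow_le_rpow (le_trans hB hc.1.le) hc.2.le (by linarith)
    nlinarith [mul_le_mul_of_nonneg_right (mul_le_mul_of_nonneg_left hle (by linarith : (0:ℝ) ≤ r))
      (by linarith : (0:ℝ) ≤ A - B)]

/-- weighted per-coordinate inequality: weight absorbed via `w = a^(1/s)` -/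
lemma weighted (hs : 1 < s) {c : ℝ}
    (hsc : ∀ x y : ℝ, c * (y^2 * (|y| + |x|) ^ (s-2)) ≤ |x+y| ^ s - |x| ^ s - s * (|x| ^ (s-2) * x) * y)
    {a : ℝ} (ha : 0 < a) (ξ η : ℝ) :
    c * ((a ^ ((1:ℝ)/s) * |η|)^2 * (a ^ ((1:ℝ)/s) * |η| + a ^ ((1:ℝ)/s) * |ξ|) ^ (s-2)) ≤
      a * |ξ + η| ^ s - a * |ξ| ^ s - s * (a * |ξ| ^ (s-2) * ξ) * η := by
  have hs0 : s ≠ 0 := by positivity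
  set w : ℝ := a ^ ((1:ℝ)/s) with hw
  have hwpos : 0 < w := Real.rpow_pos_of_pos ha _
  have hws : w ^ s = a := by
    rw [hw, ← Real.rpow_mul ha.le, one_div, inv_mul_cancel₀ hs0, Real.rpow_one]
  have hwa : w ^ (s-2) * w * w = a := by
    have e : w ^ (s-2) * w * w = w ^ (s-2) * w ^ (1:ℝ) * w ^ (1:ℝ) := by
      rw [Real.rpow_one]
    rw [e, ← Real.rpow_add hwpos, ← Real.rpow_add hwpos,
      show s - 2 + 1 + 1 = s by ring, hws]
  have key := hsc (w*ξ) (w*η)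
  rw [show w*ξ + w*η = w*(ξ+η) by ring] at key
  rw [abs_mul, abs_mul, abs_mul, abs_of_pos hwpos] at key
  calc c * ((w * |η|)^2 * (w * |η| + w * |ξ|) ^ (s-2))
      = c * ((w*η)^2 * (w * |η| + w * |ξ|) ^ (s-2)) := by
        rw [mul_pow, mul_pow, sq_abs]
    _ ≤ (w*|ξ+η|) ^ s - (w*|ξ|) ^ s - s * ((w*|ξ|) ^ (s-2) * (w*ξ)) * (w*η) := key
    _ = a * |ξ+η| ^ s - a * |ξ| ^ s - s * (a * |ξ| ^ (s-2) * ξ) * η := by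
        rw [Real.mul_rpow hwpos.le (abs_nonneg _), Real.mul_rpow hwpos.le (abs_nonneg _),
          Real.mul_rpow hwpos.le (abs_nonneg _), hws]
        linear_combination (-(s * |ξ| ^ (s-2) * ξ * η)) * hwa


end BregmanAux

/-- The weighted `s`-norm `|ξ|_{s,a} = (Σᵢ aᵢ|ξᵢ|^s)^{1/s}`. -/
noncomputable def wnorm {n : ℕ} (s : ℝ) (a : Fin n → ℝ) (ξ : Fin n → ℝ) : ℝ :=
  (∑ i, a i * |ξ i| ^ s) ^ ((1 : ℝ) / s)

/-- Lower bound for the Bregman distance of `|·|_{s,a}^p` when `1 < s < p`. -/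
theorem bregman_wnorm_lower (p s : ℝ) (hs : 1 < s) (hsp : s < p) :
    ∃ c : ℝ, 0 < c ∧
      ∀ (n : ℕ) (a : Fin n → ℝ), (∀ i, 0 < a i) →
        ∀ ξ η : Fin n → ℝ,
          c * wnorm s a ξ ^ (p - s) *
              (∑ i, ((a i) ^ ((1 : ℝ) / s) * |η i|) ^ 2 *
                ((a i) ^ ((1 : ℝ) / s) * |η i| + (a i) ^ ((1 : ℝ) / s) * |ξ i|) ^ (s - 2)) ≤
            wnorm s a (ξ + η) ^ p - wnorm s a ξ ^ p -
              p * wnorm s a ξ ^ (p - s) * ∑ i, a i * |ξ i| ^ (s - 2) * ξ i * η i := by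
  obtain ⟨c, hc, hsc⟩ := scalar hs
  refine ⟨c, hc, ?_⟩
  intro n a ha ξ η
  have hs0 : (0:ℝ) < s := by linarith
  set Sξ : ℝ := ∑ i, a i * |ξ i| ^ s with hSξ
  set Sζ : ℝ := ∑ i, a i * |ξ i + η i| ^ s with hSζ
  set T : ℝ := ∑ i, ((a i) ^ ((1 : ℝ) / s) * |η i|) ^ 2 *
      ((a i) ^ ((1 : ℝ) / s) * |η i| + (a i) ^ ((1 : ℝ) / s) * |ξ i|) ^ (s - 2) with hT
  set Ssig : ℝ := ∑ i, a i * |ξ i| ^ (s - 2) * ξ i * η i with hSsig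
  have hSξ0 : 0 ≤ Sξ :=
    Finset.sum_nonneg fun i _ => mul_nonneg (ha i).le (Real.rpow_nonneg (abs_nonneg _) _)
  have hSζ0 : 0 ≤ Sζ :=
    Finset.sum_nonneg fun i _ => mul_nonneg (ha i).le (Real.rpow_nonneg (abs_nonneg _) _)
  have hT0 : 0 ≤ T :=
    Finset.sum_nonneg fun i _ => mul_nonneg (sq_nonneg _) (Real.rpow_nonneg
      (add_nonneg (mul_nonneg (Real.rpow_nonneg (ha i).le _) (abs_nonneg _))
        (mul_nonneg (Real.rpow_nonneg (ha i).le _) (abs_nonneg _))) _)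
  -- step 1 : sum of scalar inequalities
  have hG : c * T ≤ Sζ - Sξ - s * Ssig := by
    have hsum := Finset.sum_le_sum (f := fun i =>
        c * (((a i) ^ ((1:ℝ)/s) * |η i|)^2 *
          ((a i) ^ ((1:ℝ)/s) * |η i| + (a i) ^ ((1:ℝ)/s) * |ξ i|) ^ (s-2)))
      (g := fun i => a i * |ξ i + η i| ^ s - a i * |ξ i| ^ s -
          s * (a i * |ξ i| ^ (s-2) * ξ i) * η i)
      (s := Finset.univ) (fun i _ => weighted hs hsc (ha i) (ξ i) (η i))
    rw [← Finset.mul_sum] at hsum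
    rw [Finset.sum_sub_distrib, Finset.sum_sub_distrib] at hsum
    have e : ∑ i, s * (a i * |ξ i| ^ (s-2) * ξ i) * η i = s * Ssig := by
      rw [hSsig, Finset.mul_sum]
      exact Finset.sum_congr rfl fun i _ => by ring
    rw [e] at hsum
    exact hsum
  -- step 2 : power step
  set r : ℝ := p / s with hr'
  have hr : 1 < r := (one_lt_div hs0).mpr hsp
  have hp : p = r * s := by rw [hr']; field_simp
  have hH := rpow_tangent hSξ0 hSζ0 hr
  -- rewrite wnorms
  have e1 : wnorm s a ξ ^ p = Sξ ^ r := by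
    rw [wnorm, ← hSξ, ← Real.rpow_mul hSξ0, hr']
    congr 1
    field_simp
  have e2 : wnorm s a ξ ^ (p - s) = Sξ ^ (r - 1) := by
    rw [wnorm, ← hSξ, ← Real.rpow_mul hSξ0]
    congr 1
    rw [hr']
    field_simp
  have e3 : wnorm s a (ξ + η) ^ p = Sζ ^ r := by
    have : wnorm s a (ξ + η) = Sζ ^ ((1:ℝ)/s) := by
      rw [wnorm, hSζ]
      simp only [Pi.add_apply]
    rw [this, ← Real.rpow_mul hSζ0, hr']
    congr 1
    field_simp
  rw [e1, e2, e3, hp]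
  have hP : 0 ≤ Sξ ^ (r - 1) := Real.rpow_nonneg hSξ0 _
  have h1 : r * Sξ ^ (r-1) * (c * T) ≤ r * Sξ ^ (r-1) * (Sζ - Sξ - s * Ssig) :=
    mul_le_mul_of_nonneg_left hG (by positivity)
  have h2 : c * Sξ ^ (r-1) * T ≤ r * Sξ ^ (r-1) * (c * T) := by
    nlinarith [mul_nonneg (mul_nonneg hc.le hP) hT0]
  nlinarith [hH, h1, h2]
end

section
/- Let 1 < s < p < ∞, fix positive weights a₁,…,aₙ, and define |ξ|_{s,a} := (Σᵢ aᵢ|ξᵢ|^s)^{1/s} and f(ξ) := |ξ|_{s,a}^s. There exists a constant C(s,n) > 0 such that for all ξ, η ∈ ℝⁿ with |ξ|_{s,a} > |η|_{s,a}, |f(ξ+η) − f(ξ)|² ≤ C(s,n)·(Σᵢ |ηᵢ'|²(|ηᵢ'|+|ξᵢ'|)^{s-2})·|ξ|_{s,a}^s, where ξᵢ' := aᵢ^{1/s}ξᵢ, ηᵢ' := aᵢ^{1/s}ηᵢ. -/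
open Finset Real

private lemma rpow_sq_eq {b : ℝ} (hb : 0 ≤ b) (t : ℝ) : (b ^ t) ^ 2 = b ^ (t * 2) := by
  rw [Real.rpow_mul hb, ← Real.rpow_natCast (b ^ t) 2]
  norm_num

/-- convexity / Bernoulli : `u^s - v^s ≤ s (u - v) u^{s-1}` for `0 ≤ v ≤ u`, `1 ≤ s`. -/
private lemma rpow_sub_rpow_le {s u v : ℝ} (hs : 1 ≤ s) (hv : 0 ≤ v) (huv : v ≤ u) :
    u ^ s - v ^ s ≤ s * (u - v) * u ^ (s - 1) := by
  have hu : 0 ≤ u := hv.trans huv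
  rcases hu.eq_or_lt with h0 | h0
  · have hv0 : v = 0 := le_antisymm (huv.trans h0.symm.le) hv
    simp [← h0, hv0, Real.zero_rpow (by linarith : s ≠ 0)]
  · have hz : -1 ≤ v / u - 1 := by
      have : 0 ≤ v / u := div_nonneg hv hu
      linarith
    have hber := one_add_mul_self_le_rpow_one_add hz hs
    rw [add_sub_cancel] at hber
    rw [Real.div_rpow hv hu] at hber
    have hus : 0 < u ^ s := Real.rpow_pos_of_pos h0 s
    have h1 : (1 + s * (v / u - 1)) * u ^ s ≤ v ^ s := by
      calc (1 + s * (v / u - 1)) * u ^ s ≤ (v ^ s / u ^ s) * u ^ s :=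
            mul_le_mul_of_nonneg_right hber hus.le
        _ = v ^ s := div_mul_cancel₀ _ hus.ne'
    have hexp : u ^ s = u * u ^ (s - 1) := by
      rw [← Real.rpow_one_add' h0.le (by intro h; nlinarith : (1:ℝ) + (s - 1) ≠ 0)]
      ring_nf
    have key : (v / u - 1) * u ^ s = (v - u) * u ^ (s - 1) := by
      rw [hexp]; field_simp
    have h2 : u ^ s + s * ((v - u) * u ^ (s - 1)) ≤ v ^ s := by
      have : (1 + s * (v / u - 1)) * u ^ s = u ^ s + s * ((v / u - 1) * u ^ s) := by ring
      rw [this, key] at h1; exact h1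
    have h3 : s * (u - v) * u ^ (s - 1) = -(s * ((v - u) * u ^ (s - 1))) := by ring
    linarith

/-- `|u^s − v^s| ≤ s |u−v| (max u v)^{s-1}` for nonneg `u v`. -/
private lemma abs_rpow_sub_rpow_le {s u v : ℝ} (hs : 1 ≤ s) (hu : 0 ≤ u) (hv : 0 ≤ v) :
    |u ^ s - v ^ s| ≤ s * |u - v| * (max u v) ^ (s - 1) := by
  rcases le_total v u with h | h
  · rw [abs_of_nonneg (sub_nonneg.2 (Real.rpow_le_rpow hv h (by linarith))),
        abs_of_nonneg (sub_nonneg.2 h), max_eq_left h]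
    exact rpow_sub_rpow_le hs hv h
  · rw [abs_sub_comm, abs_sub_comm u v,
        abs_of_nonneg (sub_nonneg.2 (Real.rpow_le_rpow hu h (by linarith))),
        abs_of_nonneg (sub_nonneg.2 h), max_eq_right h]
    exact rpow_sub_rpow_le hs hu h

private lemma add_rpow_le {s u v : ℝ} (hs : 0 ≤ s) (hu : 0 ≤ u) (hv : 0 ≤ v) :
    (u + v) ^ s ≤ 2 ^ s * (u ^ s + v ^ s) := by
  have h1 : u + v ≤ 2 * max u v := by
    rcases le_total u v with h | h
    · rw [max_eq_right h]; linarith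
    · rw [max_eq_left h]; linarith
  have h2 : (u + v) ^ s ≤ (2 * max u v) ^ s :=
    Real.rpow_le_rpow (by linarith) h1 hs
  have h3 : (2 * max u v) ^ s = 2 ^ s * (max u v) ^ s :=
    Real.mul_rpow (by norm_num) (le_max_of_le_left hu)
  have h4 : (max u v) ^ s ≤ u ^ s + v ^ s := by
    rcases le_total u v with h | h
    · rw [max_eq_right h]
      have := Real.rpow_nonneg hu s; linarith
    · rw [max_eq_left h]
      have := Real.rpow_nonneg hv s; linarith
  calc (u + v) ^ s ≤ 2 ^ s * (max u v) ^ s := by rw [← h3]; exact h2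
    _ ≤ 2 ^ s * (u ^ s + v ^ s) :=
        mul_le_mul_of_nonneg_left h4 (Real.rpow_nonneg (by norm_num) s)

/-- Estimate `|f(ξ+η) − f(ξ)|² ≤ C(s,n)·(Σᵢ |ηᵢ'|²(|ηᵢ'|+|ξᵢ'|)^{s-2})·|ξ|_{s,a}^s`
for `f(ξ) = |ξ|_{s,a}^s`, when `|ξ|_{s,a} > |η|_{s,a}`. -/
theorem f_difference_sq_estimate (p s : ℝ) (hs : 1 < s) (hsp : s < p) (n : ℕ) :
    ∃ C : ℝ, 0 < C ∧
      ∀ (a : Fin n → ℝ), (∀ i, 0 < a i) →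
        ∀ ξ η : Fin n → ℝ, wnorm s a η < wnorm s a ξ →
          ((∑ i, a i * |ξ i + η i| ^ s) - ∑ i, a i * |ξ i| ^ s) ^ 2 ≤
            C * (∑ i, ((a i) ^ ((1 : ℝ) / s) * |η i|) ^ 2 *
                ((a i) ^ ((1 : ℝ) / s) * |η i| + (a i) ^ ((1 : ℝ) / s) * |ξ i|) ^ (s - 2)) *
              wnorm s a ξ ^ s := by
  have hs0 : (0:ℝ) < s := by linarith
  refine ⟨s ^ 2 * 2 ^ (s + 1), by positivity, fun a ha ξ η hw => ?_⟩
  set e : Fin n → ℝ := fun i => (a i) ^ ((1:ℝ)/s) * |η i| with he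
  set x : Fin n → ℝ := fun i => (a i) ^ ((1:ℝ)/s) * |ξ i| with hx
  set b : Fin n → ℝ := fun i => e i + x i with hb
  have hanonneg : ∀ i, (0:ℝ) ≤ (a i) ^ ((1:ℝ)/s) := fun i => (Real.rpow_pos_of_pos (ha i) _).le
  have he0 : ∀ i, 0 ≤ e i := fun i => mul_nonneg (hanonneg i) (abs_nonneg _)
  have hx0 : ∀ i, 0 ≤ x i := fun i => mul_nonneg (hanonneg i) (abs_nonneg _)
  have hb0 : ∀ i, 0 ≤ b i := fun i => add_nonneg (he0 i) (hx0 i)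
  -- a i * u ^ s = (a^{1/s} * u)^s
  have hascale : ∀ i, ∀ u : ℝ, 0 ≤ u → a i * u ^ s = ((a i) ^ ((1:ℝ)/s) * u) ^ s := by
    intro i u hu
    rw [Real.mul_rpow (hanonneg i) hu, ← Real.rpow_mul (ha i).le,
      one_div_mul_cancel hs0.ne', Real.rpow_one]
  -- wnorm ^ s is the plain weighted sum
  have hsumnn : ∀ ζ : Fin n → ℝ, (0:ℝ) ≤ ∑ i, a i * |ζ i| ^ s := fun ζ =>
    Finset.sum_nonneg fun i _ => mul_nonneg (ha i).le (Real.rpow_nonneg (abs_nonneg _) s)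
  have hWs : ∀ ζ : Fin n → ℝ, wnorm s a ζ ^ s = ∑ i, a i * |ζ i| ^ s := by
    intro ζ
    rw [wnorm, ← Real.rpow_mul (hsumnn ζ), one_div_mul_cancel hs0.ne', Real.rpow_one]
  have hWnn : (0:ℝ) ≤ wnorm s a ξ := Real.rpow_nonneg (hsumnn ξ) _
  have hηξ : wnorm s a η ^ s ≤ wnorm s a ξ ^ s :=
    Real.rpow_le_rpow (Real.rpow_nonneg (hsumnn η) _) hw.le hs0.le
  -- pointwise bound
  have hpoint : ∀ i, |a i * |ξ i + η i| ^ s - a i * |ξ i| ^ s| ≤ s * e i * b i ^ (s - 1) := by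
    intro i
    rw [hascale i _ (abs_nonneg _), hascale i _ (abs_nonneg _)]
    set U := (a i) ^ ((1:ℝ)/s) * |ξ i + η i| with hU
    have hU0 : 0 ≤ U := mul_nonneg (hanonneg i) (abs_nonneg _)
    have h1 := abs_rpow_sub_rpow_le hs.le hU0 (hx0 i)
    have h2 : |U - x i| ≤ e i := by
      rw [hU, hx, ← mul_sub, abs_mul, abs_of_nonneg (hanonneg i)]
      refine mul_le_mul_of_nonneg_left ?_ (hanonneg i)
      have h := abs_abs_sub_abs_le_abs_sub (ξ i + η i) (ξ i)
      simpa using h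
    have h3 : max U (x i) ≤ b i := by
      refine max_le ?_ (le_add_of_nonneg_left (he0 i))
      calc U ≤ (a i) ^ ((1:ℝ)/s) * (|ξ i| + |η i|) :=
            mul_le_mul_of_nonneg_left (abs_add_le _ _) (hanonneg i)
        _ = b i := by rw [hb]; simp only [he, hx]; ring
    have h4 : (max U (x i)) ^ (s - 1) ≤ b i ^ (s - 1) :=
      Real.rpow_le_rpow (le_max_of_le_left hU0) h3 (by linarith)
    calc |U ^ s - x i ^ s| ≤ s * |U - x i| * (max U (x i)) ^ (s - 1) := h1
      _ ≤ s * e i * b i ^ (s - 1) := by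
          have hm : 0 ≤ (max U (x i)) ^ (s - 1) := Real.rpow_nonneg (le_max_of_le_left hU0) _
          have := mul_le_mul (mul_le_mul_of_nonneg_left h2 hs0.le) h4 hm
            (mul_nonneg hs0.le (he0 i))
          exact this
  -- sum bound for the difference
  have habsD : |(∑ i, a i * |ξ i + η i| ^ s) - ∑ i, a i * |ξ i| ^ s|
      ≤ ∑ i, s * e i * b i ^ (s - 1) := by
    rw [← Finset.sum_sub_distrib]
    exact (Finset.abs_sum_le_sum_abs _ _).trans (Finset.sum_le_sum fun i _ => hpoint i)
  have hMnn : (0:ℝ) ≤ ∑ i, s * e i * b i ^ (s - 1) :=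
    Finset.sum_nonneg fun i _ =>
      mul_nonneg (mul_nonneg hs0.le (he0 i)) (Real.rpow_nonneg (hb0 i) _)
  have hsq : ((∑ i, a i * |ξ i + η i| ^ s) - ∑ i, a i * |ξ i| ^ s) ^ 2
      ≤ (∑ i, s * e i * b i ^ (s - 1)) ^ 2 := by
    rw [← sq_abs]
    exact pow_le_pow_left₀ (abs_nonneg _) habsD 2
  -- Cauchy–Schwarz
  set f : Fin n → ℝ := fun i => e i * b i ^ ((s - 2) / 2) with hf
  set g : Fin n → ℝ := fun i => b i ^ (s / 2) with hg
  have hfg : ∀ i, e i * b i ^ (s - 1) = f i * g i := by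
    intro i
    show e i * b i ^ (s - 1) = e i * b i ^ ((s - 2) / 2) * b i ^ (s / 2)
    conv_rhs => rw [mul_assoc]
    rw [← Real.rpow_add' (hb0 i) (by intro h; nlinarith : (s-2)/2 + s/2 ≠ 0),
      show (s-2)/2 + s/2 = s - 1 by ring]
  have hf2 : ∀ i, f i ^ 2 = e i ^ 2 * b i ^ (s - 2) := by
    intro i
    show (e i * b i ^ ((s - 2) / 2)) ^ 2 = e i ^ 2 * b i ^ (s - 2)
    rw [mul_pow, rpow_sq_eq (hb0 i), show (s-2)/2*2 = s - 2 by ring]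
  have hg2 : ∀ i, g i ^ 2 = b i ^ s := by
    intro i
    show (b i ^ (s / 2)) ^ 2 = b i ^ s
    rw [rpow_sq_eq (hb0 i), show s/2*2 = s by ring]
  have hCS : (∑ i, e i * b i ^ (s - 1)) ^ 2
      ≤ (∑ i, e i ^ 2 * b i ^ (s - 2)) * ∑ i, b i ^ s := by
    simp only [hfg, ← hf2, ← hg2]
    exact Finset.sum_mul_sq_le_sq_mul_sq _ f g
  -- sum of b^s bound
  have hes : ∑ i, e i ^ s = wnorm s a η ^ s := by
    rw [hWs]
    exact Finset.sum_congr rfl fun i _ => (hascale i _ (abs_nonneg _)).symm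
  have hxs : ∑ i, x i ^ s = wnorm s a ξ ^ s := by
    rw [hWs]
    exact Finset.sum_congr rfl fun i _ => (hascale i _ (abs_nonneg _)).symm
  have hbs : ∑ i, b i ^ s ≤ 2 ^ (s + 1) * wnorm s a ξ ^ s := by
    calc ∑ i, b i ^ s ≤ ∑ i, 2 ^ s * (e i ^ s + x i ^ s) :=
          Finset.sum_le_sum fun i _ => add_rpow_le hs0.le (he0 i) (hx0 i)
      _ = 2 ^ s * ((∑ i, e i ^ s) + ∑ i, x i ^ s) := by
          rw [← Finset.mul_sum, Finset.sum_add_distrib]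
      _ ≤ 2 ^ s * (wnorm s a ξ ^ s + wnorm s a ξ ^ s) := by
          refine mul_le_mul_of_nonneg_left ?_ (Real.rpow_nonneg (by norm_num) _)
          rw [hes, hxs]
          exact add_le_add_left hηξ _
      _ = 2 ^ (s + 1) * wnorm s a ξ ^ s := by
          rw [Real.rpow_add (by norm_num : (0:ℝ) < 2), Real.rpow_one]; ring
  -- assemble
  have hTnn : (0:ℝ) ≤ ∑ i, e i ^ 2 * b i ^ (s - 2) :=
    Finset.sum_nonneg fun i _ => mul_nonneg (sq_nonneg _) (Real.rpow_nonneg (hb0 i) _)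
  have hWsnn : (0:ℝ) ≤ wnorm s a ξ ^ s := Real.rpow_nonneg hWnn _
  calc ((∑ i, a i * |ξ i + η i| ^ s) - ∑ i, a i * |ξ i| ^ s) ^ 2
      ≤ (∑ i, s * e i * b i ^ (s - 1)) ^ 2 := hsq
    _ = s ^ 2 * (∑ i, e i * b i ^ (s - 1)) ^ 2 := by
        rw [show (fun i => s * e i * b i ^ (s - 1)) = fun i => s * (e i * b i ^ (s - 1)) by
          funext i; ring, ← Finset.mul_sum, mul_pow]
    _ ≤ s ^ 2 * ((∑ i, e i ^ 2 * b i ^ (s - 2)) * ∑ i, b i ^ s) :=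
        mul_le_mul_of_nonneg_left hCS (sq_nonneg s)
    _ ≤ s ^ 2 * ((∑ i, e i ^ 2 * b i ^ (s - 2)) * (2 ^ (s + 1) * wnorm s a ξ ^ s)) := by
        refine mul_le_mul_of_nonneg_left (mul_le_mul_of_nonneg_left hbs hTnn) (sq_nonneg s)
    _ = s ^ 2 * 2 ^ (s + 1) * (∑ i, e i ^ 2 * b i ^ (s - 2)) * wnorm s a ξ ^ s := by ring
end
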